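/- arXiv:math/0104241 — 9 statements merged into one kernel-verified Lean document; each statement's English description precedes it below -/
import Mathlib

section
/- Let y : ℕ → ℚ(y₀,y₁,y₂,y₃) be defined by y(0),y(1),y(2),y(3) being the four indeterminates and y(k) = (y(k-1)·y(k-3) + y(k-2)²)/y(k-4) for k ≥ 4 (the Somos-4 recurrence). Then for every k, y(k) is a Laurent polynomial with integer coefficients in y₀, y₁, y₂, y₃. -/
open MvPolynomial

noncomputable section Somos4Helpers

/-! ### Generic coprimality lemmas -/

section cp
variable {α : Type*} [CommRing α] [DecompositionMonoid α] {a b c d e : α}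

theorem somos_cpA (rel : e * a = d * b + c * c) (hbc : IsRelPrime b c) : IsRelPrime e b := by
  intro k hke hkb
  have hcc : k ∣ c * c := by
    have h := dvd_sub (hke.mul_right a) (hkb.mul_left d)
    rwa [show e * a - d * b = c * c by linear_combination rel] at h
  exact ((hbc.mul_right hbc).of_dvd_left hkb).isUnit_of_dvd hcc

theorem somos_cpB (rel : e * a = d * b + c * c) (hcd : IsRelPrime c d) (hbc : IsRelPrime b c) :
    IsRelPrime e c := by
  intro k hke hkc
  have hdb : k ∣ d * b := by
    have h := dvd_sub (hke.mul_right a) (hkc.mul_left c)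
    rwa [show e * a - c * c = d * b by linear_combination rel] at h
  exact ((hcd.mul_right hbc.symm).of_dvd_left hkc).isUnit_of_dvd hdb

theorem somos_cpC (rel : e * a = d * b + c * c) (hcd : IsRelPrime c d) : IsRelPrime e d := by
  intro k hke hkd
  have hcc : k ∣ c * c := by
    have h := dvd_sub (hke.mul_right a) (hkd.mul_right b)
    rwa [show e * a - d * b = c * c by linear_combination rel] at h
  exact ((hcd.symm.mul_right hcd.symm).of_dvd_left hkd).isUnit_of_dvd hcc

/-- The key divisibility for the Somos-4 Laurent phenomenon. -/
theorem somos_keydvd (w0 w1 w2 w3 w4 w5 w6 w7 : α)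
    (r0 : w4 * w0 = w3 * w1 + w2 * w2) (r1 : w5 * w1 = w4 * w2 + w3 * w3)
    (r2 : w6 * w2 = w5 * w3 + w4 * w4) (r3 : w7 * w3 = w6 * w4 + w5 * w5)
    (cp1 : IsRelPrime w4 w1) (cp2 : IsRelPrime w4 w2) (cp3 : IsRelPrime w4 w3) :
    w4 ∣ w7 * w5 + w6 * w6 := by
  have h1 : w3 * (w7 * w5 + w6 * w6) = w4 * (w6 * w5) + (w5 ^ 3 + w3 * (w6 * w6)) := by
    linear_combination w5 * r3
  have h2 : (w2 * w2) * (w5 ^ 3 + w3 * (w6 * w6))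
      = w4 * (2 * w5 * w3 ^ 2 * w4 + w3 * w4 ^ 3) + (w2 ^ 2 * w5 ^ 3 + w3 ^ 3 * w5 ^ 2) := by
    linear_combination (w3 * (w6 * w2 + w5 * w3 + w4 * w4)) * r2
  have h3 : w1 * (w2 ^ 2 * w5 ^ 3 + w3 ^ 3 * w5 ^ 2)
      = w4 * (w5 ^ 2 * w2 ^ 3 + w5 ^ 2 * w3 ^ 2 * w0) := by
    linear_combination (w5 ^ 2 * w2 ^ 2) * r1 - (w5 ^ 2 * w3 ^ 2) * r0
  have hd : w4 ∣ w1 * ((w2 * w2) * (w3 * (w7 * w5 + w6 * w6))) := by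
    refine ⟨w1 * (w2 * w2) * (w6 * w5) + w1 * (2 * w5 * w3 ^ 2 * w4 + w3 * w4 ^ 3)
      + (w5 ^ 2 * w2 ^ 3 + w5 ^ 2 * w3 ^ 2 * w0), ?_⟩
    linear_combination (w1 * (w2 * w2)) * h1 + w1 * h2 + h3
  have h4 := cp1.dvd_of_dvd_mul_left hd
  have h5 := (cp2.mul_right cp2).dvd_of_dvd_mul_left h4
  exact cp3.dvd_of_dvd_mul_left h5

end cp

/-! ### The Laurent ring as a localization -/

abbrev SomosA : Type := MvPolynomial (Fin 4) ℤ

def SomosS : Submonoid SomosA := Submonoid.closure (Set.range X)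

abbrev SomosL : Type := Localization SomosS

lemma somosS_le : SomosS ≤ nonZeroDivisors SomosA :=
  Submonoid.closure_le.2 (by
    rintro _ ⟨i, rfl⟩
    exact mem_nonZeroDivisors_of_ne_zero (X_ne_zero i))

instance : IsDomain SomosL := IsLocalization.isDomain_localization somosS_le

lemma somos_phi_inj : Function.Injective (algebraMap SomosA SomosL) :=
  IsLocalization.injective SomosL somosS_le

lemma somos_phi_dvd (a b : SomosA)
    (h : algebraMap SomosA SomosL a ∣ algebraMap SomosA SomosL b) :
    ∃ s : SomosS, a ∣ b * (s : SomosA) := by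
  obtain ⟨z, hz⟩ := h
  obtain ⟨⟨e, s⟩, hs⟩ := IsLocalization.surj (M := SomosS) z
  have hmap : algebraMap SomosA SomosL (b * (s : SomosA)) = algebraMap SomosA SomosL (a * e) := by
    rw [map_mul, map_mul, hz, mul_assoc, hs]
  exact ⟨s, e, somos_phi_inj hmap⟩

lemma somos_assoc_phi (z : SomosL) : ∃ a : SomosA, Associated z (algebraMap SomosA SomosL a) := by
  obtain ⟨⟨a, s⟩, h⟩ := IsLocalization.surj (M := SomosS) z
  have hu : IsUnit (algebraMap SomosA SomosL (s : SomosA)) := IsLocalization.map_units SomosL s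
  exact ⟨a, hu.unit, by rw [IsUnit.unit_spec]; exact h⟩

instance : DecompositionMonoid SomosL where
  primal z := by
    intro x y hdvd
    obtain ⟨a, ha⟩ := somos_assoc_phi z
    obtain ⟨b, hb⟩ := somos_assoc_phi x
    obtain ⟨c, hc⟩ := somos_assoc_phi y
    obtain ⟨ua, hua⟩ := ha
    have hza : Associated z (algebraMap SomosA SomosL a) := ⟨ua, hua⟩
    have h1 : algebraMap SomosA SomosL a ∣ algebraMap SomosA SomosL (b * c) := by
      rw [map_mul]
      exact (hza.symm.dvd).trans (hdvd.trans (mul_dvd_mul hb.dvd hc.dvd))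
    obtain ⟨s, hs⟩ := somos_phi_dvd _ _ h1
    have hs' : a ∣ b * (c * (s : SomosA)) := by rwa [mul_assoc] at hs
    obtain ⟨a1, a2, hd1, hd2, rfl⟩ := exists_dvd_and_dvd_of_dvd_mul hs'
    refine ⟨algebraMap SomosA SomosL a1, algebraMap SomosA SomosL a2 * ↑ua⁻¹, ?_, ?_, ?_⟩
    · exact ((_root_.map_dvd _ hd1).trans hb.symm.dvd)
    · have d1 : algebraMap SomosA SomosL a2 ∣ algebraMap SomosA SomosL c := by
        have h := _root_.map_dvd (algebraMap SomosA SomosL) hd2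
        rw [map_mul] at h
        exact ((IsLocalization.map_units SomosL s).dvd_mul_right).mp h
      have d0 : algebraMap SomosA SomosL a2 * ↑ua⁻¹ ∣ algebraMap SomosA SomosL a2 :=
        ⟨↑ua, by rw [mul_assoc, Units.inv_mul, mul_one]⟩
      exact d0.trans (d1.trans hc.symm.dvd)
    · have h2 : z * ↑ua = algebraMap SomosA SomosL a1 * algebraMap SomosA SomosL a2 := by
        rw [hua, map_mul]
      rw [← mul_assoc, ← h2, mul_assoc, Units.mul_inv, mul_one]

lemma somos_X_mem (i : Fin 4) : X i ∈ SomosS := Submonoid.subset_closure ⟨i, rfl⟩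

/-! ### The initial window in the Laurent ring -/

def zvar (i : Fin 4) : SomosL := algebraMap SomosA SomosL (X i)

lemma zvar_unit (i : Fin 4) : IsUnit (zvar i) :=
  IsLocalization.map_units SomosL ⟨X i, somos_X_mem i⟩

def zu (i : Fin 4) : SomosLˣ := (zvar_unit i).unit

lemma zu_coe (i : Fin 4) : ((zu i : SomosLˣ) : SomosL) = zvar i := (zvar_unit i).unit_spec

def somosZ4 : SomosL := (zvar 3 * zvar 1 + zvar 2 * zvar 2) * ↑(zu 0)⁻¹
def somosZ5 : SomosL := (somosZ4 * zvar 2 + zvar 3 * zvar 3) * ↑(zu 1)⁻¹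
def somosZ6 : SomosL := (somosZ5 * zvar 3 + somosZ4 * somosZ4) * ↑(zu 2)⁻¹
def somosZ7 : SomosL := (somosZ6 * somosZ4 + somosZ5 * somosZ5) * ↑(zu 3)⁻¹

lemma somos_rel0 : somosZ4 * zvar 0 = zvar 3 * zvar 1 + zvar 2 * zvar 2 := by
  unfold somosZ4
  rw [← zu_coe 0, mul_assoc, Units.inv_mul, mul_one]

lemma somos_rel1 : somosZ5 * zvar 1 = somosZ4 * zvar 2 + zvar 3 * zvar 3 := by
  unfold somosZ5
  rw [← zu_coe 1, mul_assoc, Units.inv_mul, mul_one]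

lemma somos_rel2 : somosZ6 * zvar 2 = somosZ5 * zvar 3 + somosZ4 * somosZ4 := by
  unfold somosZ6
  rw [← zu_coe 2, mul_assoc, Units.inv_mul, mul_one]

lemma somos_rel3 : somosZ7 * zvar 3 = somosZ6 * somosZ4 + somosZ5 * somosZ5 := by
  unfold somosZ7
  rw [← zu_coe 3, mul_assoc, Units.inv_mul, mul_one]

lemma somos_cp45 : IsRelPrime somosZ4 somosZ5 :=
  (somos_cpC somos_rel1 ((zvar_unit 3).isRelPrime_left)).symm
lemma somos_cp46 : IsRelPrime somosZ4 somosZ6 :=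
  (somos_cpB somos_rel2 somos_cp45 ((zvar_unit 3).isRelPrime_left)).symm
lemma somos_cp56 : IsRelPrime somosZ5 somosZ6 := (somos_cpC somos_rel2 somos_cp45).symm
lemma somos_cp47 : IsRelPrime somosZ4 somosZ7 := (somos_cpA somos_rel3 somos_cp45).symm
lemma somos_cp57 : IsRelPrime somosZ5 somosZ7 :=
  (somos_cpB somos_rel3 somos_cp56 somos_cp45).symm
lemma somos_cp67 : IsRelPrime somosZ6 somosZ7 := (somos_cpC somos_rel3 somos_cp56).symm

/-! ### Evaluation at 1 (positivity witness) -/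

def somosEvA : SomosA →+* ℚ := eval₂Hom (Int.castRingHom ℚ) (fun _ => 1)

lemma somosEvA_S (s : SomosS) : somosEvA (s : SomosA) = 1 := by
  obtain ⟨s, hs⟩ := s
  induction hs using Submonoid.closure_induction with
  | mem t ht => obtain ⟨i, rfl⟩ := ht; simp [somosEvA]
  | one => exact map_one _
  | mul t1 t2 _ _ ih1 ih2 => rw [map_mul, ih1, ih2, mul_one]

lemma somosEvA_units (s : SomosS) : IsUnit (somosEvA (s : SomosA)) := by
  rw [somosEvA_S]; exact isUnit_one

def somosEv : SomosL →+* ℚ := IsLocalization.lift (M := SomosS) somosEvA_units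

lemma somosEv_phi (a : SomosA) : somosEv (algebraMap SomosA SomosL a) = somosEvA a :=
  IsLocalization.lift_eq somosEvA_units a

lemma somosEv_zvar (i : Fin 4) : somosEv (zvar i) = 1 := by
  rw [zvar, somosEv_phi]; simp [somosEvA]

lemma somosEv_zu_inv (i : Fin 4) : somosEv ↑(zu i)⁻¹ = 1 := by
  rw [map_units_inv, zu_coe, somosEv_zvar]; norm_num

lemma somosEv_z4 : somosEv somosZ4 = 2 := by
  rw [somosZ4, map_mul, map_add, map_mul, map_mul, somosEv_zu_inv]
  norm_num [somosEv_zvar]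

lemma somosEv_z5 : somosEv somosZ5 = 3 := by
  rw [somosZ5, map_mul, map_add, map_mul, map_mul, somosEv_zu_inv, somosEv_z4]
  norm_num [somosEv_zvar]

lemma somosEv_z6 : somosEv somosZ6 = 7 := by
  rw [somosZ6, map_mul, map_add, map_mul, map_mul, somosEv_zu_inv, somosEv_z5, somosEv_z4]
  norm_num [somosEv_zvar]

lemma somosEv_z7 : somosEv somosZ7 = 23 := by
  rw [somosZ7, map_mul, map_add, map_mul, map_mul, somosEv_zu_inv, somosEv_z6, somosEv_z5,
    somosEv_z4]
  norm_num

end Somos4Helpers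

set_option maxHeartbeats 2000000 in
/-- The Somos-4 recurrence exhibits the Laurent phenomenon: each term is a
Laurent polynomial with integer coefficients in the four initial indeterminates. -/
theorem somos4_laurent
    (F : Type*) [Field F] [Algebra (MvPolynomial (Fin 4) ℤ) F]
    [IsFractionRing (MvPolynomial (Fin 4) ℤ) F]
    (x : Fin 4 → F) (hx : ∀ i, x i = algebraMap (MvPolynomial (Fin 4) ℤ) F (X i))
    (y : ℕ → F)
    (hinit : ∀ i : Fin 4, y i = x i)
    (hrec : ∀ k : ℕ, y (k + 4) = (y (k + 3) * y (k + 1) + y (k + 2) ^ 2) / y k) :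
    ∀ k : ℕ, y k ∈ Algebra.adjoin ℤ
      (Set.range x ∪ Set.range (fun i => (x i)⁻¹)) := by
  have hx' : x = fun i => algebraMap (MvPolynomial (Fin 4) ℤ) F (X i) := funext hx
  subst hx'
  have hφinj : Function.Injective (algebraMap SomosA F) := IsFractionRing.injective _ _
  have hunit : ∀ s : SomosS, IsUnit (algebraMap SomosA F (s : SomosA)) := by
    rintro ⟨s, hs⟩
    induction hs using Submonoid.closure_induction with
    | mem t ht =>
      obtain ⟨i, rfl⟩ := ht
      refine isUnit_iff_ne_zero.2 (fun h0 => X_ne_zero (R := ℤ) i (hφinj ?_))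
      rw [h0, map_zero]
    | one => rw [map_one]; exact isUnit_one
    | mul t1 t2 _ _ ih1 ih2 => rw [map_mul]; exact ih1.mul ih2
  set ψ : SomosL →+* F := IsLocalization.lift (M := SomosS) hunit with hψdef
  have hψφ : ∀ a : SomosA, ψ (algebraMap SomosA SomosL a) = algebraMap SomosA F a :=
    fun a => IsLocalization.lift_eq hunit a
  have hψ0 : ∀ z : SomosL, ψ z = 0 → z = 0 := by
    intro z h
    obtain ⟨⟨a, s⟩, hskel⟩ := IsLocalization.surj (M := SomosS) z
    have ha0 : algebraMap SomosA F a = 0 := by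
      rw [← hψφ a, ← hskel, map_mul, h, zero_mul]
    have ha : a = 0 := hφinj (by rw [ha0, map_zero])
    have hz0 : z * algebraMap SomosA SomosL (s : SomosA) = 0 := by
      rw [hskel, ha, map_zero]
    have hu := IsLocalization.map_units SomosL s
    exact (mul_eq_zero.mp hz0).resolve_right hu.ne_zero
  -- every element in the image of ψ is in the adjoined subalgebra
  have hinv : ∀ s : SomosS, (algebraMap SomosA F (s : SomosA))⁻¹ ∈ Algebra.adjoin ℤ
      ((Set.range fun i => algebraMap SomosA F (X i)) ∪
        (Set.range fun i => (algebraMap SomosA F (X i))⁻¹)) := by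
    rintro ⟨s, hs⟩
    induction hs using Submonoid.closure_induction with
    | mem t ht =>
      obtain ⟨i, rfl⟩ := ht
      exact Algebra.subset_adjoin (Or.inr ⟨i, rfl⟩)
    | one => rw [map_one, inv_one]; exact Subalgebra.one_mem _
    | mul t1 t2 _ _ ih1 ih2 =>
      rw [map_mul, mul_inv]
      exact Subalgebra.mul_mem _ ih1 ih2
  have hmem : ∀ z : SomosL, ψ z ∈ Algebra.adjoin ℤ
      ((Set.range fun i => algebraMap SomosA F (X i)) ∪
        (Set.range fun i => (algebraMap SomosA F (X i))⁻¹)) := by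
    intro z
    obtain ⟨⟨a, s⟩, hskel⟩ := IsLocalization.surj (M := SomosS) z
    have h1 : ∀ b : SomosA, algebraMap SomosA F b ∈ Algebra.adjoin ℤ
        ((Set.range fun i => algebraMap SomosA F (X i)) ∪
          (Set.range fun i => (algebraMap SomosA F (X i))⁻¹)) := by
      intro b
      induction b using MvPolynomial.induction_on with
      | C r =>
        have : (algebraMap SomosA F) (C r) = algebraMap ℤ F r := by
          have : (algebraMap SomosA F).comp (C : ℤ →+* SomosA) = algebraMap ℤ F :=
            RingHom.ext_int _ _
          rw [← this]; rfl
        rw [this]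
        exact Subalgebra.algebraMap_mem _ r
      | add p q hp hq => rw [map_add]; exact Subalgebra.add_mem _ hp hq
      | mul_X p i hp =>
        rw [map_mul]
        exact Subalgebra.mul_mem _ hp (Algebra.subset_adjoin (Or.inl ⟨i, rfl⟩))
    have h2 := hinv s
    have hsne : algebraMap SomosA F (s : SomosA) ≠ 0 := (hunit s).ne_zero
    have hzval : ψ z = algebraMap SomosA F a * (algebraMap SomosA F (s : SomosA))⁻¹ := by
      have h := congrArg ψ hskel
      rw [map_mul, hψφ, hψφ] at h
      exact (eq_mul_inv_iff_mul_eq₀ hsne).mpr h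
    rw [hzval]
    exact Subalgebra.mul_mem _ (h1 a) h2
  -- ψ-values of the initial window
  have hψv : ∀ i : Fin 4, ψ (zvar i) = y i := by
    intro i
    exact (hψφ (X i)).trans (hinit i).symm
  have hy0 : ψ (zvar 0) = y 0 := hψv 0
  have hy1 : ψ (zvar 1) = y 1 := hψv 1
  have hy2 : ψ (zvar 2) = y 2 := hψv 2
  have hy3 : ψ (zvar 3) = y 3 := hψv 3
  have hψ4 : ψ somosZ4 = y 4 := by
    rw [hrec 0, somosZ4, map_mul, map_add, map_mul, map_mul, map_units_inv, zu_coe,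
      hy0, hy1, hy2, hy3, div_eq_mul_inv]
    ring
  have hψ5 : ψ somosZ5 = y 5 := by
    rw [hrec 1, somosZ5, map_mul, map_add, map_mul, map_mul, map_units_inv, zu_coe,
      hy1, hy2, hy3, hψ4, div_eq_mul_inv]
    ring
  have hψ6 : ψ somosZ6 = y 6 := by
    rw [hrec 2, somosZ6, map_mul, map_add, map_mul, map_mul, map_units_inv, zu_coe,
      hy2, hy3, hψ4, hψ5, div_eq_mul_inv]
    ring
  have hψ7 : ψ somosZ7 = y 7 := by
    rw [hrec 3, somosZ7, map_mul, map_add, map_mul, map_mul, map_units_inv, zu_coe,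
      hy3, hψ4, hψ5, hψ6, div_eq_mul_inv]
    ring
  -- main induction
  have key : ∀ n : ℕ, ∃ w : ℕ → SomosL,
      (∀ j, j ≤ n + 7 → ψ (w j) = y j) ∧
      (∀ j, j ≤ n + 7 → 0 < somosEv (w j)) ∧
      (∀ j, j ≤ n + 3 → w (j + 4) * w j = w (j + 3) * w (j + 1) + w (j + 2) * w (j + 2)) ∧
      (∀ i j, i < j → j ≤ i + 3 → j ≤ n + 7 → IsRelPrime (w i) (w j)) := by
    intro n
    induction n with
    | zero =>
      refine ⟨fun j => match j with
        | 0 => zvar 0 | 1 => zvar 1 | 2 => zvar 2 | 3 => zvar 3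
        | 4 => somosZ4 | 5 => somosZ5 | 6 => somosZ6 | 7 => somosZ7 | _ => 1, ?_, ?_, ?_, ?_⟩
      · intro j hj
        interval_cases j
        exacts [hy0, hy1, hy2, hy3, hψ4, hψ5, hψ6, hψ7]
      · intro j hj
        interval_cases j
        exacts [by show (0:ℚ) < somosEv (zvar 0); rw [somosEv_zvar]; norm_num,
          by show (0:ℚ) < somosEv (zvar 1); rw [somosEv_zvar]; norm_num,
          by show (0:ℚ) < somosEv (zvar 2); rw [somosEv_zvar]; norm_num,
          by show (0:ℚ) < somosEv (zvar 3); rw [somosEv_zvar]; norm_num,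
          by show (0:ℚ) < somosEv somosZ4; rw [somosEv_z4]; norm_num,
          by show (0:ℚ) < somosEv somosZ5; rw [somosEv_z5]; norm_num,
          by show (0:ℚ) < somosEv somosZ6; rw [somosEv_z6]; norm_num,
          by show (0:ℚ) < somosEv somosZ7; rw [somosEv_z7]; norm_num]
      · intro j hj
        interval_cases j
        exacts [somos_rel0, somos_rel1, somos_rel2, somos_rel3]
      · intro i j h1 h2 h3
        interval_cases j <;> interval_cases i <;>
          first
            | exact (zvar_unit 0).isRelPrime_left
            | exact (zvar_unit 1).isRelPrime_left
            | exact (zvar_unit 2).isRelPrime_left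
            | exact (zvar_unit 3).isRelPrime_left
            | exact somos_cp45
            | exact somos_cp46
            | exact somos_cp47
            | exact somos_cp56
            | exact somos_cp57
            | exact somos_cp67
    | succ n ih =>
      obtain ⟨w, hψw, hpos, hrel, hcp⟩ := ih
      have r0 : w (n+4) * w n = w (n+3) * w (n+1) + w (n+2) * w (n+2) := hrel n (by omega)
      have r1 : w (n+5) * w (n+1) = w (n+4) * w (n+2) + w (n+3) * w (n+3) := hrel (n+1) (by omega)
      have r2 : w (n+6) * w (n+2) = w (n+5) * w (n+3) + w (n+4) * w (n+4) := hrel (n+2) (by omega)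
      have r3 : w (n+7) * w (n+3) = w (n+6) * w (n+4) + w (n+5) * w (n+5) := hrel (n+3) (by omega)
      have cp41 : IsRelPrime (w (n+4)) (w (n+1)) :=
        (hcp (n+1) (n+4) (by omega) (by omega) (by omega)).symm
      have cp42 : IsRelPrime (w (n+4)) (w (n+2)) :=
        (hcp (n+2) (n+4) (by omega) (by omega) (by omega)).symm
      have cp43 : IsRelPrime (w (n+4)) (w (n+3)) :=
        (hcp (n+3) (n+4) (by omega) (by omega) (by omega)).symm
      have cp56 : IsRelPrime (w (n+5)) (w (n+6)) :=
        hcp (n+5) (n+6) (by omega) (by omega) (by omega)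
      have cp67 : IsRelPrime (w (n+6)) (w (n+7)) :=
        hcp (n+6) (n+7) (by omega) (by omega) (by omega)
      have hdvd : w (n+4) ∣ w (n+7) * w (n+5) + w (n+6) * w (n+6) :=
        somos_keydvd (w n) (w (n+1)) (w (n+2)) (w (n+3)) (w (n+4)) (w (n+5)) (w (n+6)) (w (n+7))
          r0 r1 r2 r3 cp41 cp42 cp43
      obtain ⟨cnew, hcnew⟩ := hdvd
      have relc : cnew * w (n+4) = w (n+7) * w (n+5) + w (n+6) * w (n+6) := by
        linear_combination -hcnew
      have hw4pos := hpos (n+4) (by omega)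
      have hw4ne : w (n+4) ≠ 0 := by
        intro h; rw [h, map_zero] at hw4pos; exact lt_irrefl 0 hw4pos
      have hy4 : ψ (w (n+4)) = y (n+4) := hψw (n+4) (by omega)
      have hy4ne : y (n+4) ≠ 0 := by
        rw [← hy4]; intro h; exact hw4ne (hψ0 _ h)
      have hψc : ψ cnew = y (n+8) := by
        have e1 : ψ cnew * y (n+4) = y (n+7) * y (n+5) + y (n+6) * y (n+6) := by
          have h := congrArg ψ hcnew
          simp only [map_add, map_mul] at h
          rw [hψw (n+7) (by omega), hψw (n+5) (by omega), hψw (n+6) (by omega), hy4] at h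
          linear_combination -h
        have e2 : y (n+8) * y (n+4) = y (n+7) * y (n+5) + y (n+6) ^ 2 := by
          rw [hrec (n+4), div_mul_cancel₀ _ hy4ne]
        apply mul_right_cancel₀ hy4ne
        rw [e1, e2]; ring
      have hcpos : 0 < somosEv cnew := by
        have h := congrArg somosEv hcnew
        simp only [map_add, map_mul] at h
        nlinarith [hpos (n+5) (by omega), hpos (n+6) (by omega), hpos (n+7) (by omega), hw4pos]
      have hupd : ∀ m, m ≠ n + 8 → Function.update w (n+8) cnew m = w m :=
        fun m hm => Function.update_of_ne hm _ _
      have hupd8 : Function.update w (n+8) cnew (n+8) = cnew := Function.update_self _ _ _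
      refine ⟨Function.update w (n+8) cnew, ?_, ?_, ?_, ?_⟩
      · intro j hj
        rcases eq_or_ne j (n+8) with rfl | hne
        · rw [hupd8]; exact hψc
        · rw [hupd j hne]; exact hψw j (by omega)
      · intro j hj
        rcases eq_or_ne j (n+8) with rfl | hne
        · rw [hupd8]; exact hcpos
        · rw [hupd j hne]; exact hpos j (by omega)
      · intro j hj
        rcases eq_or_ne j (n+4) with rfl | hne
        · show Function.update w (n+8) cnew (n+8) * Function.update w (n+8) cnew (n+4)
              = Function.update w (n+8) cnew (n+7) * Function.update w (n+8) cnew (n+5)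
              + Function.update w (n+8) cnew (n+6) * Function.update w (n+8) cnew (n+6)
          rw [hupd8, hupd (n+4) (by omega), hupd (n+7) (by omega), hupd (n+5) (by omega),
            hupd (n+6) (by omega)]
          exact relc
        · rw [hupd (j+4) (by omega), hupd j (by omega), hupd (j+3) (by omega),
            hupd (j+1) (by omega), hupd (j+2) (by omega)]
          exact hrel j (by omega)
      · intro i j h1 h2 h3
        rcases eq_or_ne j (n+8) with rfl | hne
        · rw [hupd8, hupd i (by omega)]
          have hi : i = n+5 ∨ i = n+6 ∨ i = n+7 := by omega
          rcases hi with rfl | rfl | rfl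
          · exact (somos_cpA relc cp56).symm
          · exact (somos_cpB relc cp67 cp56).symm
          · exact (somos_cpC relc cp67).symm
        · rw [hupd i (by omega), hupd j hne]
          exact hcp i j h1 h2 (by omega)
  intro k
  obtain ⟨w, h1, _, _, _⟩ := key k
  rw [← h1 k (by omega)]
  exact hmem _
end

section
/- Let a,b,c be positive integers and let y : ℕ → ℚ(y₀,y₁,y₂,y₃) satisfy y(k) = (y(k-3)^a · y(k-1)^c + y(k-2)^b)/y(k-4) for k ≥ 4, with y(0),…,y(3) indeterminates. Then every y(k) lies in ℤ[y₀^{±1}, y₁^{±1}, y₂^{±1}, y₃^{±1}]. -/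
/-!
Work in the Laurent ring `ℤ[x₀^{±1}, …, x₃^{±1}]`, realised inside `F` as the localization of
`ℤ[x₀, …, x₃]` at the monomials, which is a UFD. By strong induction each `y n` lies in this ring,
is coprime there to its three predecessors, and is positive at `x = (1, 1, 1, 1)`, hence nonzero.
For the step, reducing the four relations that end with `y (p + 7)` modulo `y (p + 4)` shows that
`y (p + 4)` divides `y (p + 1) ^ a * y (p + 2) ^ b * y (p + 3) ^ c` times the numerator of
`y (p + 8)`; coprimality cancels the prefactor, so the division defining `y (p + 8)` is exact.
Coprimality of a new term with its predecessors follows from its own defining relation.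
-/

namespace Somos4

variable {A B : Type*} [CommRing A] [CommRing B] {a b c : ℕ}

variable (a b c) in
def numerator (z : ℕ → A) (k : ℕ) : A :=
  z (k + 1) ^ a * z (k + 3) ^ c + z (k + 2) ^ b

variable (a b c) in
theorem map_numerator (f : A →+* B) (z : ℕ → A) (k : ℕ) :
    f (numerator a b c z k) = numerator a b c (f ∘ z) k := by
  simp [numerator]

theorem mul_numerator_eq_zero (ha : 0 < a) (hb : 0 < b) (hc : 0 < c) {z : ℕ → A} {p : ℕ}
    (h₀ : z (p + 4) * z p = numerator a b c z p)
    (h₁ : z (p + 5) * z (p + 1) = numerator a b c z (p + 1))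
    (h₂ : z (p + 6) * z (p + 2) = numerator a b c z (p + 2))
    (h₃ : z (p + 7) * z (p + 3) = numerator a b c z (p + 3)) (hz : z (p + 4) = 0) :
    z (p + 1) ^ a * (z (p + 2) ^ b * (z (p + 3) ^ c * numerator a b c z (p + 4))) = 0 := by
  simp only [numerator, add_assoc, Nat.reduceAdd, hz, zero_mul, zero_pow ha.ne', zero_pow hb.ne',
    zero_pow hc.ne', mul_zero, add_zero, zero_add] at h₀ h₁ h₂ h₃ ⊢
  have h₁' := congrArg (· ^ a) h₁
  have h₂' := congrArg (· ^ b) h₂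
  have h₃' := congrArg (· ^ c) h₃
  simp only [mul_pow, ← pow_mul] at h₁' h₂' h₃'
  -- `z₁ᵃ z₅ᵃ = z₃ᵃᵇ`, `z₂ᵇ z₆ᵇ = z₃ᵃᵇ z₅ᵇᶜ` and `z₃ᶜ z₇ᶜ = z₅ᵇᶜ` turn the left side into
  -- `z₃ᵃᵇ z₅ᵇᶜ (z₁ᵃ z₃ᶜ + z₂ᵇ)`, which vanishes by `h₀`.
  linear_combination (z (p + 1) ^ a * z (p + 2) ^ b * z (p + 5) ^ a) * h₃'
    + (z (p + 3) ^ c * z (p + 1) ^ a) * h₂' + (z (p + 2) ^ b * z (p + 5) ^ (b * c)) * h₁'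
    - (z (p + 5) ^ (b * c) * z (p + 3) ^ (b * a)) * h₀

theorem dvd_mul_numerator (ha : 0 < a) (hb : 0 < b) (hc : 0 < c) {z : ℕ → A} {p : ℕ}
    (h₀ : z (p + 4) * z p = numerator a b c z p)
    (h₁ : z (p + 5) * z (p + 1) = numerator a b c z (p + 1))
    (h₂ : z (p + 6) * z (p + 2) = numerator a b c z (p + 2))
    (h₃ : z (p + 7) * z (p + 3) = numerator a b c z (p + 3)) :
    z (p + 4) ∣ z (p + 1) ^ a * (z (p + 2) ^ b * (z (p + 3) ^ c * numerator a b c z (p + 4))) := by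
  set π := Ideal.Quotient.mk (Ideal.span {z (p + 4)})
  have hπ (k : ℕ) (h : z (k + 4) * z k = numerator a b c z k) :
      (π ∘ z) (k + 4) * (π ∘ z) k = numerator a b c (π ∘ z) k := by
    rw [← map_numerator, ← h, map_mul, Function.comp_apply, Function.comp_apply]
  have := mul_numerator_eq_zero ha hb hc (hπ p h₀) (hπ (p + 1) h₁) (hπ (p + 2) h₂) (hπ (p + 3) h₃)
    ((Ideal.Quotient.eq_zero_iff_dvd _ _).mpr dvd_rfl)
  rwa [← map_numerator, Function.comp_apply, Function.comp_apply, Function.comp_apply,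
    ← map_pow, ← map_pow, ← map_pow, ← map_mul, ← map_mul, ← map_mul,
    Ideal.Quotient.eq_zero_iff_dvd] at this

theorem pos_of_mul_eq_numerator {L : Type*} [CommRing L] [LinearOrder L] [IsStrictOrderedRing L]
    {v : ℕ → L} {m : ℕ} (h : v (m + 4) * v m = numerator a b c v m)
    (hpos : ∀ j, m ≤ j → j < m + 4 → 0 < v j) : 0 < v (m + 4) := by
  have hnum : 0 < numerator a b c v m :=
    add_pos (mul_pos (pow_pos (hpos _ (by omega) (by omega)) a)
      (pow_pos (hpos _ (by omega) (by omega)) c)) (pow_pos (hpos _ (by omega) (by omega)) b)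
  exact (mul_pos_iff_of_pos_right (hpos m le_rfl (by omega))).mp (h ▸ hnum)

theorem map_eq_iff_mul_eq_numerator {K : Type*} [Field K] {ι : A →+* K}
    (hι : Function.Injective ι) {z : ℕ → A} {y : ℕ → K} {k : ℕ}
    (hz : ∀ j, k ≤ j → j < k + 4 → ι (z j) = y j) (hy : y k ≠ 0)
    (hrec : y (k + 4) = numerator a b c y k / y k) (w : A) :
    ι w = y (k + 4) ↔ w * z k = numerator a b c z k := by
  have hnum : ι (numerator a b c z k) = numerator a b c y k := by
    rw [map_numerator]
    simp (disch := omega) only [numerator, Function.comp_apply, hz]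
  rw [← hι.eq_iff, map_mul, hnum, hz k le_rfl (by omega), hrec, eq_div_iff hy]

variable [DecompositionMonoid A]

theorem dvd_numerator (ha : 0 < a) (hb : 0 < b) (hc : 0 < c) {z : ℕ → A} {p : ℕ}
    (h₀ : z (p + 4) * z p = numerator a b c z p)
    (h₁ : z (p + 5) * z (p + 1) = numerator a b c z (p + 1))
    (h₂ : z (p + 6) * z (p + 2) = numerator a b c z (p + 2))
    (h₃ : z (p + 7) * z (p + 3) = numerator a b c z (p + 3))
    (hcop₁ : IsRelPrime (z (p + 4)) (z (p + 1))) (hcop₂ : IsRelPrime (z (p + 4)) (z (p + 2)))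
    (hcop₃ : IsRelPrime (z (p + 4)) (z (p + 3))) :
    z (p + 4) ∣ numerator a b c z (p + 4) :=
  hcop₃.pow_right.dvd_of_dvd_mul_left <| hcop₂.pow_right.dvd_of_dvd_mul_left <|
    hcop₁.pow_right.dvd_of_dvd_mul_left <| dvd_mul_numerator ha hb hc h₀ h₁ h₂ h₃

theorem isRelPrime_of_mul_eq_numerator (ha : 0 < a) (hb : 0 < b) (hc : 0 < c) {z : ℕ → A}
    {m : ℕ} (h : z (m + 4) * z m = numerator a b c z m)
    (h₁₂ : IsRelPrime (z (m + 1)) (z (m + 2))) (h₂₃ : IsRelPrime (z (m + 2)) (z (m + 3))) :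
    ∀ j, m < j → j < m + 4 → IsRelPrime (z j) (z (m + 4)) := by
  have hdvd {d : A} (hd : d ∣ z (m + 4)) : d ∣ numerator a b c z m :=
    h ▸ dvd_mul_of_dvd_left hd _
  intro j hj₁ hj₂
  obtain rfl | rfl | rfl : j = m + 1 ∨ j = m + 2 ∨ j = m + 3 := by omega
  · refine fun d hd₁ hd₄ ↦ h₁₂.pow_right (n := b) hd₁ ?_
    exact (dvd_add_right (dvd_mul_of_dvd_left (dvd_pow hd₁ ha.ne') _)).mp (hdvd hd₄)
  · have hcop := (h₁₂.symm.pow_right (n := a)).mul_right (h₂₃.pow_right (n := c))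
    refine fun d hd₂ hd₄ ↦ hcop hd₂ ?_
    exact (dvd_add_left (dvd_pow hd₂ hb.ne')).mp (hdvd hd₄)
  · refine fun d hd₃ hd₄ ↦ h₂₃.symm.pow_right (n := b) hd₃ ?_
    exact (dvd_add_right (dvd_mul_of_dvd_right (dvd_pow hd₃ hc.ne') _)).mp (hdvd hd₄)

theorem dvd_numerator_of_forall_lt (ha : 0 < a) (hb : 0 < b) (hc : 0 < c) {z : ℕ → A} {m : ℕ}
    (hunit : ∀ i < 4, IsUnit (z i)) (hrel : ∀ k < m, z (k + 4) * z k = numerator a b c z k)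
    (hcop : ∀ i j, i < j → j ≤ i + 3 → j ≤ m → IsRelPrime (z i) (z j)) :
    z m ∣ numerator a b c z m := by
  obtain hm | hm := lt_or_ge m 4
  · exact (hunit m hm).dvd
  · obtain ⟨p, rfl⟩ := Nat.exists_eq_add_of_le' hm
    exact dvd_numerator ha hb hc (hrel p (by omega)) (hrel (p + 1) (by omega))
      (hrel (p + 2) (by omega)) (hrel (p + 3) (by omega))
      (hcop _ _ (by omega) (by omega) le_rfl).symm (hcop _ _ (by omega) (by omega) le_rfl).symm
      (hcop _ _ (by omega) (by omega) le_rfl).symm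

theorem mem_range_of_init_isUnit {K L : Type*} [Field K] [CommRing L] [LinearOrder L]
    [IsStrictOrderedRing L] (ha : 0 < a) (hb : 0 < b) (hc : 0 < c) (ι : A →+* K)
    (hι : Function.Injective ι) (ev : A →+* L) {y : ℕ → K}
    (hinit : ∀ i < 4, ∃ u, IsUnit u ∧ 0 < ev u ∧ ι u = y i)
    (hrec : ∀ k, y (k + 4) = numerator a b c y k / y k) (n : ℕ) : y n ∈ Set.range ι := by
  have : Nonempty A := ⟨0⟩
  -- `z n` is the preimage of `y n`; it is meaningful only once `y n ∈ Set.range ι` is known.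
  set z : ℕ → A := fun n ↦ Function.invFun ι (y n)
  have hz_init (i : ℕ) (hi : i < 4) : ι (z i) = y i ∧ IsUnit (z i) ∧ 0 < ev (z i) := by
    obtain ⟨u, hu, hpos, hyu⟩ := hinit i hi
    obtain rfl : z i = u := hι ((Function.invFun_eq ⟨u, hyu⟩).trans hyu.symm)
    exact ⟨hyu, hu, hpos⟩
  suffices h : ∀ n, y n ∈ Set.range ι ∧ 0 < ev (z n) ∧
      ∀ j < n, n ≤ j + 3 → IsRelPrime (z j) (z n) from (h n).1
  intro n
  induction n using Nat.strong_induction_on with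
  | _ n ih =>
  obtain hn | hn := lt_or_ge n 4
  · obtain ⟨hy, hu, hpos⟩ := hz_init n hn
    exact ⟨⟨z n, hy⟩, hpos, fun j _ _ ↦ hu.isRelPrime_right⟩
  obtain ⟨m, rfl⟩ := Nat.exists_eq_add_of_le' hn
  have hιz (j : ℕ) (hj : j < m + 4) : ι (z j) = y j := Function.invFun_eq (ih j hj).1
  have hy0 (j : ℕ) (hj : j < m + 4) : y j ≠ 0 := by
    rw [← hιz j hj, map_ne_zero_iff ι hι]
    rintro h0
    simpa [h0] using (ih j hj).2.1
  have hlift (k : ℕ) (hk : k ≤ m) :=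
    map_eq_iff_mul_eq_numerator hι (fun j _ hj ↦ hιz j (by omega)) (hy0 k (by omega)) (hrec k)
  have hrel (k : ℕ) (hk : k < m) : z (k + 4) * z k = numerator a b c z k :=
    (hlift k hk.le _).mp (hιz _ (by omega))
  obtain ⟨w, hw⟩ := dvd_numerator_of_forall_lt ha hb hc (fun i hi ↦ (hz_init i hi).2.1) hrel
    (fun i j hij hji hjm ↦ (ih j (by omega)).2.2 i hij hji)
  have hyw : ι w = y (m + 4) := (hlift m le_rfl w).mpr (by rw [hw, mul_comm])
  obtain rfl : z (m + 4) = w := hι ((Function.invFun_eq ⟨w, hyw⟩).trans hyw.symm)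
  have hrelm := (hlift m le_rfl _).mp hyw
  refine ⟨⟨_, hyw⟩, ?_, fun j hj₁ hj₂ ↦ ?_⟩
  · have hrel_ev := congrArg ev hrelm
    rw [map_mul, map_numerator] at hrel_ev
    exact pos_of_mul_eq_numerator (v := ev ∘ z) hrel_ev fun j _ hj ↦ (ih j hj).2.1
  · exact isRelPrime_of_mul_eq_numerator ha hb hc hrelm ((ih (m + 2) (by omega)).2.2 _
      (by omega) (by omega)) ((ih (m + 3) (by omega)).2.2 _ (by omega) (by omega)) j
      (by omega) hj₁

end Somos4

namespace MvPolynomial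

variable {σ F : Type*}

theorem closure_range_X_le_nonZeroDivisors {R : Type*} [CommRing R] [IsDomain R] :
    Submonoid.closure (Set.range (X : σ → MvPolynomial σ R)) ≤
      nonZeroDivisors (MvPolynomial σ R) :=
  Submonoid.closure_le.mpr <| Set.range_subset_iff.mpr fun i ↦
    mem_nonZeroDivisors_of_ne_zero (X_ne_zero i)

theorem eval_one_of_mem_closure_range_X {R : Type*} [CommSemiring R] {s : MvPolynomial σ R}
    (hs : s ∈ Submonoid.closure (Set.range X)) : eval 1 s = 1 := by
  induction hs using Submonoid.closure_induction with
  | mem _ h => obtain ⟨i, rfl⟩ := h; simp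
  | one => simp
  | mul _ _ _ _ hs ht => rw [map_mul, hs, ht, mul_one]

theorem algebraMap_mem_adjoin_range_X [CommRing F] [Algebra (MvPolynomial σ ℤ) F]
    (p : MvPolynomial σ ℤ) :
    algebraMap _ F p ∈
      Algebra.adjoin ℤ (Set.range fun i ↦ algebraMap (MvPolynomial σ ℤ) F (X i)) := by
  rw [Algebra.adjoin_range_eq_range_aeval]
  exact ⟨p, (congrArg (· p) (aeval_unique (IsScalarTower.toAlgHom ℤ (MvPolynomial σ ℤ) F))).symm⟩

theorem inv_algebraMap_mem_adjoin_inv_X [Field F] [Algebra (MvPolynomial σ ℤ) F]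
    {s : MvPolynomial σ ℤ} (hs : s ∈ Submonoid.closure (Set.range X)) :
    (algebraMap _ F s)⁻¹ ∈
      Algebra.adjoin ℤ (Set.range fun i ↦ (algebraMap (MvPolynomial σ ℤ) F (X i))⁻¹) := by
  induction hs using Submonoid.closure_induction with
  | mem _ h => obtain ⟨i, rfl⟩ := h; exact Algebra.subset_adjoin ⟨i, rfl⟩
  | one => simp
  | mul _ _ _ _ hs ht => rw [map_mul, mul_inv]; exact Subalgebra.mul_mem _ hs ht

theorem mem_adjoin_of_mem_ofField [Field F] [Algebra (MvPolynomial σ ℤ) F]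
    [IsFractionRing (MvPolynomial σ ℤ) F] {r : F}
    (hr : r ∈ Localization.subalgebra.ofField F _
      (closure_range_X_le_nonZeroDivisors (σ := σ) (R := ℤ))) :
    r ∈ Algebra.adjoin ℤ (Set.range (fun i ↦ algebraMap (MvPolynomial σ ℤ) F (X i)) ∪
      Set.range fun i ↦ (algebraMap (MvPolynomial σ ℤ) F (X i))⁻¹) := by
  obtain ⟨p, s, hs, rfl⟩ := hr
  exact Subalgebra.mul_mem _
    (Algebra.adjoin_mono Set.subset_union_left (algebraMap_mem_adjoin_range_X p))
    (Algebra.adjoin_mono Set.subset_union_right (inv_algebraMap_mem_adjoin_inv_X hs))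

end MvPolynomial

open MvPolynomial

/-- The generalized Somos-4 recurrence y_k y_{k-4} = y_{k-3}^a y_{k-1}^c + y_{k-2}^b
exhibits the Laurent phenomenon. -/
theorem generalized_somos4_laurent
    (a b c : ℕ) (ha : 0 < a) (hb : 0 < b) (hc : 0 < c)
    (F : Type*) [Field F] [Algebra (MvPolynomial (Fin 4) ℤ) F]
    [IsFractionRing (MvPolynomial (Fin 4) ℤ) F]
    (x : Fin 4 → F) (hx : ∀ i, x i = algebraMap (MvPolynomial (Fin 4) ℤ) F (X i))
    (y : ℕ → F)
    (hinit : ∀ i : Fin 4, y i = x i)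
    (hrec : ∀ k : ℕ, y (k + 4) = (y (k + 1) ^ a * y (k + 3) ^ c + y (k + 2) ^ b) / y k) :
    ∀ k : ℕ, y k ∈ Algebra.adjoin ℤ
      (Set.range x ∪ Set.range (fun i => (x i)⁻¹)) := by
  obtain rfl : x = fun i ↦ algebraMap _ F (X i) := funext hx
  set S := Submonoid.closure (Set.range (X : Fin 4 → MvPolynomial (Fin 4) ℤ))
  set A := Localization.subalgebra.ofField F S closure_range_X_le_nonZeroDivisors
  have := UniqueFactorizationMonoid.of_isLocalization S A
  let ev : A →+* ℤ := IsLocalization.lift (M := S) (g := eval 1) fun s ↦ by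
    rw [eval_one_of_mem_closure_range_X s.2]; exact isUnit_one
  have hunit (i : ℕ) (hi : i < 4) : ∃ u : A, IsUnit u ∧ 0 < ev u ∧ A.val u = y i := by
    refine ⟨algebraMap _ A (X ⟨i, hi⟩),
      IsLocalization.map_units A (⟨X _, Submonoid.subset_closure ⟨_, rfl⟩⟩ : S), ?_, ?_⟩
    · simp [ev, IsLocalization.lift_eq]
    · exact (hinit ⟨i, hi⟩).symm
  intro k
  obtain ⟨u, hu⟩ := Somos4.mem_range_of_init_isUnit ha hb hc A.val.toRingHom
    Subtype.val_injective ev hunit hrec k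
  exact hu ▸ mem_adjoin_of_mem_ofField u.2
end

section
/- Every term of the sequence defined by y(0)=y(1)=y(2)=y(3)=1 and y(k) = (y(k-1)y(k-3) + y(k-2)²)/y(k-4) for k ≥ 4 is an integer (the Somos-4 sequence is integral). -/
private lemma somos_rec_eq (y : ℕ → ℚ)
    (hrec : ∀ k : ℕ, y (k + 4) = (y (k + 3) * y (k + 1) + y (k + 2) ^ 2) / y k)
    (m : ℕ) (hm : y m ≠ 0) :
    y (m + 4) * y m = y (m + 3) * y (m + 1) + y (m + 2) ^ 2 := by
  rw [hrec m, div_mul_cancel₀ _ hm]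

/-- The Somos-4 sequence with initial values 1,1,1,1 consists of integers. -/
theorem somos4_integrality
    (y : ℕ → ℚ)
    (h0 : y 0 = 1) (h1 : y 1 = 1) (h2 : y 2 = 1) (h3 : y 3 = 1)
    (hrec : ∀ k : ℕ, y (k + 4) = (y (k + 3) * y (k + 1) + y (k + 2) ^ 2) / y k) :
    ∀ k : ℕ, ∃ z : ℤ, y k = z := by
  have key : ∀ n : ℕ, (y n).den = 1 ∧ 0 < (y n).num ∧
      ∀ m, m < n → n ≤ m + 3 → IsCoprime ((y m).num) ((y n).num) := by
    intro n
    induction n using Nat.strong_induction_on with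
    | _ n IH =>
      match n, IH with
      | 0, _ => exact ⟨by simp [h0], by simp [h0], fun m hm _ => by omega⟩
      | 1, _ =>
        refine ⟨by simp [h1], by simp [h1], fun m hm _ => ?_⟩
        interval_cases m
        simp only [h0, h1, Rat.num_ofNat]
        exact isCoprime_one_left
      | 2, _ =>
        refine ⟨by simp [h2], by simp [h2], fun m hm _ => ?_⟩
        interval_cases m <;> simp only [h0, h1, h2, Rat.num_ofNat] <;> exact isCoprime_one_left
      | 3, _ =>
        refine ⟨by simp [h3], by simp [h3], fun m hm _ => ?_⟩
        interval_cases m <;> simp only [h0, h1, h2, h3, Rat.num_ofNat] <;> exact isCoprime_one_left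
      | (k+4), IH =>
        obtain ⟨hdT, hpT, hcT⟩ := IH k (by omega)
        obtain ⟨hdU, hpU, hcU⟩ := IH (k+1) (by omega)
        obtain ⟨hdV, hpV, hcV⟩ := IH (k+2) (by omega)
        obtain ⟨hdW, hpW, hcW⟩ := IH (k+3) (by omega)
        set t := (y k).num with ht
        set u := (y (k+1)).num with hu
        set v := (y (k+2)).num with hv
        set w := (y (k+3)).num with hw
        have etu : IsCoprime t u := hcU k (by omega) (by omega)
        have etv : IsCoprime t v := hcV k (by omega) (by omega)
        have etw : IsCoprime t w := hcW k (by omega) (by omega)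
        have euv : IsCoprime u v := hcV (k+1) (by omega) (by omega)
        have euw : IsCoprime u w := hcW (k+1) (by omega) (by omega)
        have evw : IsCoprime v w := hcW (k+2) (by omega) (by omega)
        have hyk : y k = (t : ℚ) := ((Rat.den_eq_one_iff _).mp hdT).symm
        have hyu : y (k+1) = (u : ℚ) := ((Rat.den_eq_one_iff _).mp hdU).symm
        have hyv : y (k+2) = (v : ℚ) := ((Rat.den_eq_one_iff _).mp hdV).symm
        have hyw : y (k+3) = (w : ℚ) := ((Rat.den_eq_one_iff _).mp hdW).symm
        have htne : y k ≠ 0 := by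
          rw [hyk]
          exact_mod_cast hpT.ne'
        -- the crucial divisibility
        have hdvd : t ∣ w * u + v ^ 2 := by
          rcases le_or_gt k 3 with hk | hk
          · have hk1 : y k = 1 := by interval_cases k <;> assumption
            have : t = 1 := by rw [ht, hk1]; rfl
            rw [this]; exact one_dvd _
          · obtain ⟨l, rfl⟩ : ∃ l, k = l + 4 := ⟨k - 4, by omega⟩
            obtain ⟨hdP, hpP, _⟩ := IH l (by omega)
            obtain ⟨hdQ, hpQ, _⟩ := IH (l+1) (by omega)
            obtain ⟨hdR, hpR, _⟩ := IH (l+2) (by omega)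
            obtain ⟨hdS, hpS, _⟩ := IH (l+3) (by omega)
            set p := (y l).num with hp
            set q := (y (l+1)).num with hq
            set r := (y (l+2)).num with hr
            set s := (y (l+3)).num with hs
            have hyp : y l = (p : ℚ) := ((Rat.den_eq_one_iff _).mp hdP).symm
            have hyq : y (l+1) = (q : ℚ) := ((Rat.den_eq_one_iff _).mp hdQ).symm
            have hyr : y (l+2) = (r : ℚ) := ((Rat.den_eq_one_iff _).mp hdR).symm
            have hys : y (l+3) = (s : ℚ) := ((Rat.den_eq_one_iff _).mp hdS).symm
            have hpne : y l ≠ 0 := by rw [hyp]; exact_mod_cast hpP.ne'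
            have hqne : y (l+1) ≠ 0 := by rw [hyq]; exact_mod_cast hpQ.ne'
            have hrne : y (l+2) ≠ 0 := by rw [hyr]; exact_mod_cast hpR.ne'
            have hsne : y (l+3) ≠ 0 := by rw [hys]; exact_mod_cast hpS.ne'
            have ets : IsCoprime t s := (hcT (l+3) (by omega) (by omega)).symm
            have etr : IsCoprime t r := (hcT (l+2) (by omega) (by omega)).symm
            have etq : IsCoprime t q := (hcT (l+1) (by omega) (by omega)).symm
            -- integer versions of the recurrence at indices l, l+1, l+2, l+3
            have e1q := somos_rec_eq y hrec l hpne
            have e2q := somos_rec_eq y hrec (l+1) hqne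
            have e3q := somos_rec_eq y hrec (l+2) hrne
            have e4q := somos_rec_eq y hrec (l+3) hsne
            have arith1 : l + 1 + 4 = l + 5 := by omega
            have arith2 : l + 2 + 4 = l + 6 := by omega
            have arith3 : l + 3 + 4 = l + 7 := by omega
            norm_num [arith1, arith2, arith3, show l+1+3 = l+4 from by omega,
              show l+1+2 = l+3 from by omega, show l+1+1 = l+2 from by omega,
              show l+2+3 = l+5 from by omega, show l+2+2 = l+4 from by omega,
              show l+2+1 = l+3 from by omega, show l+3+3 = l+6 from by omega,
              show l+3+2 = l+5 from by omega, show l+3+1 = l+4 from by omega]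
              at e1q e2q e3q e4q
            -- now e1q..e4q are about y l .. y (l+7); convert to ℤ
            rw [hyp, hyq, hyr, hys, hyk] at e1q
            rw [hyq, hyr, hys, hyk, hyu] at e2q
            rw [hyr, hys, hyk, hyu, hyv] at e3q
            rw [hys, hyk, hyu, hyv, hyw] at e4q
            have E1 : t * p = s * q + r ^ 2 := by exact_mod_cast e1q
            have E2 : u * q = t * r + s ^ 2 := by exact_mod_cast e2q
            have E3 : v * r = u * s + t ^ 2 := by exact_mod_cast e3q
            have E4 : w * s = v * t + u ^ 2 := by exact_mod_cast e4q
            have d4 : t ∣ w * s - u ^ 2 := ⟨v, by linarith⟩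
            have d3 : t ∣ v * r - u * s := ⟨t, by linarith⟩
            have d2 : t ∣ u * q - s ^ 2 := ⟨r, by linarith⟩
            have d1 : t ∣ s * q + r ^ 2 := ⟨p, by linarith⟩
            have hA : t ∣ (((w * u + v ^ 2) * s) * r ^ 2) * q := by
              have e : (((w * u + v ^ 2) * s) * r ^ 2) * q
                  = (w * s - u ^ 2) * (u * r ^ 2 * q)
                    + (v * r - u * s) * ((v * r + u * s) * (s * q))
                    + (u * q - s ^ 2) * (u ^ 2 * r ^ 2)
                    + (s * q + r ^ 2) * (u ^ 2 * s ^ 2) := by ring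
              rw [e]
              exact dvd_add (dvd_add (dvd_add (d4.mul_right _) (d3.mul_right _))
                (d2.mul_right _)) (d1.mul_right _)
            have hB := etq.dvd_of_dvd_mul_right hA
            have hC := (etr.pow_right (n := 2)).dvd_of_dvd_mul_right hB
            exact ets.dvd_of_dvd_mul_right hC
        obtain ⟨x, hx⟩ := hdvd
        have hxq : ((w : ℚ) * u + v ^ 2) = (t : ℚ) * x := by exact_mod_cast hx
        have hyx : y (k+4) = (x : ℚ) := by
          rw [hrec k, hyu, hyv, hyw, hyk, hxq, mul_comm,
            mul_div_assoc, div_self (by exact_mod_cast hpT.ne'), mul_one]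
        have hden : (y (k+4)).den = 1 := by rw [hyx]; exact Rat.den_intCast x
        have hnum : (y (k+4)).num = x := by rw [hyx]; exact Rat.num_intCast x
        have hxpos : 0 < x := by
          have h2 : 0 < t * x := by
            rw [← hx]
            nlinarith [mul_pos hpW hpU, sq_nonneg v, hpV]
          nlinarith [hpT]
        refine ⟨hden, by rw [hnum]; exact hxpos, ?_⟩
        intro m hm hm3
        rw [hnum]
        have hm' : m = k+1 ∨ m = k+2 ∨ m = k+3 := by omega
        rcases hm' with rfl | rfl | rfl
        · -- IsCoprime u x
          have h1 : IsCoprime u (v ^ 2) := euv.pow_right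
          have h2 : v ^ 2 = x * t - u * w := by linarith
          rw [h2] at h1
          have h3 := h1.add_mul_left_right w
          rw [sub_add_cancel] at h3
          exact h3.of_mul_right_left
        · -- IsCoprime v x
          have h1 : IsCoprime v (w * u) := evw.mul_right euv.symm
          have h2 : w * u = x * t - v * v := by nlinarith
          rw [h2] at h1
          have h3 := h1.add_mul_left_right v
          rw [sub_add_cancel] at h3
          exact h3.of_mul_right_left
        · -- IsCoprime w x
          have h1 : IsCoprime w (v ^ 2) := evw.symm.pow_right
          have h2 : v ^ 2 = x * t - w * u := by linarith
          rw [h2] at h1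
          have h3 := h1.add_mul_left_right u
          rw [sub_add_cancel] at h3
          exact h3.of_mul_right_left
  intro k
  obtain ⟨hden, -, -⟩ := key k
  exact ⟨(y k).num, ((Rat.den_eq_one_iff _).mp hden).symm⟩
end

section
/- Every term of the Somos-5 sequence, defined by y(0)=⋯=y(4)=1 and y(k) = (y(k-1)y(k-4) + y(k-2)y(k-3))/y(k-5) for k ≥ 5, is an integer. -/
/-- Alternating constant for the Somos-5 secondary (Somos-4-type) relation. -/
def somosC (n : ℕ) : ℤ := if n % 2 = 0 then 2 else 3

/-- The inductive invariant: an 8-term window of the sequence consists of positive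
integers, nearby terms (distance ≤ 3) are coprime, and the secondary bilinear
relation holds throughout the window. -/
def SomosBig (y : ℕ → ℚ) (a : ℕ → ℤ) (n : ℕ) : Prop :=
  (∀ i, i ≤ 7 → y (n + i) = (a (n + i) : ℚ) ∧ 1 ≤ a (n + i)) ∧
  (∀ i j, i < j → j ≤ 7 → j ≤ i + 3 → IsCoprime (a (n + i)) (a (n + j))) ∧
  (∀ i, i ≤ 3 → a (n + i + 4) * a (n + i) =
      somosC (n + i) * (a (n + i + 3) * a (n + i + 1)) - a (n + i + 2) ^ 2)

theorem somos_step (y : ℕ → ℚ) (a : ℕ → ℤ)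
    (ha : ∀ m : ℕ, ∀ z : ℤ, y m = (z : ℚ) → a m = z)
    (hrec : ∀ k : ℕ,
      y (k + 5) = (y (k + 4) * y (k + 1) + y (k + 3) * y (k + 2)) / y k)
    (n : ℕ) (B : SomosBig y a n) : SomosBig y a (n + 1) := by
  obtain ⟨hy, hcop, hR⟩ := B
  have hy0 : y n = (a n : ℚ) := by simpa using (hy 0 (by norm_num)).1
  have hp0 : 1 ≤ a n := by simpa using (hy 0 (by norm_num)).2
  have hy1 : y (n+1) = (a (n+1) : ℚ) := (hy 1 (by norm_num)).1
  have hp1 : 1 ≤ a (n+1) := (hy 1 (by norm_num)).2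
  have hy2 : y (n+2) = (a (n+2) : ℚ) := (hy 2 (by norm_num)).1
  have hp2 : 1 ≤ a (n+2) := (hy 2 (by norm_num)).2
  have hy3 : y (n+3) = (a (n+3) : ℚ) := (hy 3 (by norm_num)).1
  have hp3 : 1 ≤ a (n+3) := (hy 3 (by norm_num)).2
  have hy4 : y (n+4) = (a (n+4) : ℚ) := (hy 4 (by norm_num)).1
  have hp4 : 1 ≤ a (n+4) := (hy 4 (by norm_num)).2
  have hy5 : y (n+5) = (a (n+5) : ℚ) := (hy 5 (by norm_num)).1
  have hp5 : 1 ≤ a (n+5) := (hy 5 (by norm_num)).2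
  have hy6 : y (n+6) = (a (n+6) : ℚ) := (hy 6 (by norm_num)).1
  have hp6 : 1 ≤ a (n+6) := (hy 6 (by norm_num)).2
  have hy7 : y (n+7) = (a (n+7) : ℚ) := (hy 7 (by norm_num)).1
  have hp7 : 1 ≤ a (n+7) := (hy 7 (by norm_num)).2
  have hz0 : (a n : ℚ) ≠ 0 := Int.cast_ne_zero.mpr (by omega)
  have hz1 : (a (n+1) : ℚ) ≠ 0 := Int.cast_ne_zero.mpr (by omega)
  have hz2 : (a (n+2) : ℚ) ≠ 0 := Int.cast_ne_zero.mpr (by omega)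
  have hz3 : (a (n+3) : ℚ) ≠ 0 := Int.cast_ne_zero.mpr (by omega)
  -- integer Somos relations inside the window
  have hS0 : a (n+5) * a n = a (n+4) * a (n+1) + a (n+3) * a (n+2) := by
    have h := hrec n
    rw [hy0, hy1, hy2, hy3, hy4, hy5, eq_div_iff hz0] at h
    exact_mod_cast h
  have hS1 : a (n+6) * a (n+1) = a (n+5) * a (n+2) + a (n+4) * a (n+3) := by
    have h := hrec (n+1)
    simp only [show n+1+5 = n+6 by omega, show n+1+4 = n+5 by omega,
      show n+1+1 = n+2 by omega, show n+1+3 = n+4 by omega,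
      show n+1+2 = n+3 by omega] at h
    rw [hy1, hy2, hy3, hy4, hy5, hy6, eq_div_iff hz1] at h
    exact_mod_cast h
  have hS2 : a (n+7) * a (n+2) = a (n+6) * a (n+3) + a (n+5) * a (n+4) := by
    have h := hrec (n+2)
    simp only [show n+2+5 = n+7 by omega, show n+2+4 = n+6 by omega,
      show n+2+1 = n+3 by omega, show n+2+3 = n+5 by omega,
      show n+2+2 = n+4 by omega] at h
    rw [hy2, hy3, hy4, hy5, hy6, hy7, eq_div_iff hz2] at h
    exact_mod_cast h
  have hR0 : a (n+4) * a n = somosC n * (a (n+3) * a (n+1)) - a (n+2) ^ 2 := by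
    simpa using hR 0 (by norm_num)
  have hR2 : a (n+6) * a (n+2) = somosC (n+2) * (a (n+5) * a (n+3)) - a (n+4) ^ 2 := by
    have h := hR 2 (by norm_num)
    simpa [show n+2+4 = n+6 by omega, show n+2+3 = n+5 by omega,
      show n+2+2 = n+4 by omega, show n+2+1 = n+3 by omega] using h
  -- the key divisibility
  have c03 : IsCoprime (a (n+3)) (a n) := by
    have := hcop 0 3 (by norm_num) (by norm_num) (by norm_num)
    simpa using this.symm
  have c13 : IsCoprime (a (n+3)) (a (n+1)) :=
    (hcop 1 3 (by norm_num) (by norm_num) (by norm_num)).symm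
  have c23 : IsCoprime (a (n+3)) (a (n+2)) :=
    (hcop 2 3 (by norm_num) (by norm_num) (by norm_num)).symm
  have hcop3 : IsCoprime (a (n+3)) (a n ^ 2 * (a (n+1) * a (n+2))) :=
    (c03.pow_right).mul_right (c13.mul_right c23)
  have key : a n ^ 2 * (a (n+1) * a (n+2)) *
      (a (n+7) * a (n+4) + a (n+6) * a (n+5)) =
      a (n+3) * (-(a (n+1) * a (n+2) ^ 3 * a (n+4)) +
        a (n+1) ^ 2 * a (n+3) ^ 3 * somosC n ^ 2 +
        3 * a (n+1) ^ 2 * a (n+2) * a (n+3) * a (n+4) * somosC n +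
        a (n+1) ^ 3 * a (n+4) ^ 2 * somosC n) := by
    linear_combination (a n ^ 2 * a (n+1) * a (n+4)) * hS2 +
      (a n ^ 2 * a (n+3) * a (n+4) + a n ^ 2 * a (n+2) * a (n+5)) * hS1 +
      (a (n+2) ^ 3 * a (n+3) + a (n+1) * a (n+2) ^ 2 * a (n+4) +
        2 * a n * a (n+2) * a (n+3) * a (n+4) + a n * a (n+2) ^ 2 * a (n+5) +
        a n * a (n+1) * a (n+4) ^ 2) * hS0 +
      (a (n+2) ^ 2 * a (n+3) ^ 2 + a (n+1) * a (n+3) ^ 3 * somosC n +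
        3 * a (n+1) * a (n+2) * a (n+3) * a (n+4) + a (n+1) ^ 2 * a (n+4) ^ 2 +
        a n * a (n+3) ^ 2 * a (n+4)) * hR0
  have hdvd : a (n+3) ∣ a (n+7) * a (n+4) + a (n+6) * a (n+5) :=
    hcop3.dvd_of_dvd_mul_left ⟨_, key⟩
  obtain ⟨z, hzD⟩ := hdvd
  have hy8 : y (n + 8) = (z : ℚ) := by
    have h := hrec (n+3)
    simp only [show n+3+5 = n+8 by omega, show n+3+4 = n+7 by omega,
      show n+3+1 = n+4 by omega, show n+3+3 = n+6 by omega,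
      show n+3+2 = n+5 by omega] at h
    rw [hy3, hy4, hy5, hy6, hy7] at h
    rw [h, show ((a (n+7) : ℚ) * a (n+4) + a (n+6) * a (n+5)) =
      (a (n+3) : ℚ) * (z : ℚ) from by exact_mod_cast hzD,
      mul_div_cancel_left₀ _ hz3]
  have ha8 : a (n + 8) = z := ha _ _ hy8
  have hp8 : 1 ≤ a (n + 8) := by
    rw [ha8]
    nlinarith [hzD, hp3, hp4, hp5, hp6, hp7]
  have hS3 : a (n+8) * a (n+3) = a (n+7) * a (n+4) + a (n+6) * a (n+5) := by
    rw [ha8, hzD]; ring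
  -- new coprimality facts
  have c78 : IsCoprime (a (n+7)) (a (n+8)) := by
    obtain ⟨u, v, huv⟩ :=
      ((hcop 6 7 (by norm_num) (by norm_num) (by norm_num)).symm).mul_right
        ((hcop 5 7 (by norm_num) (by norm_num) (by norm_num)).symm)
    exact ⟨u - v * a (n+4), v * a (n+3), by linear_combination huv + v * hS3⟩
  have c68 : IsCoprime (a (n+6)) (a (n+8)) := by
    obtain ⟨u, v, huv⟩ :=
      (hcop 6 7 (by norm_num) (by norm_num) (by norm_num)).mul_right
        ((hcop 4 6 (by norm_num) (by norm_num) (by norm_num)).symm)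
    exact ⟨u - v * a (n+5), v * a (n+3), by linear_combination huv + v * hS3⟩
  have c58 : IsCoprime (a (n+5)) (a (n+8)) := by
    obtain ⟨u, v, huv⟩ :=
      (hcop 5 7 (by norm_num) (by norm_num) (by norm_num)).mul_right
        ((hcop 4 5 (by norm_num) (by norm_num) (by norm_num)).symm)
    exact ⟨u - v * a (n+6), v * a (n+3), by linear_combination huv + v * hS3⟩
  -- new secondary relation
  have hR4 : a (n+8) * a (n+4) =
      somosC (n+4) * (a (n+7) * a (n+5)) - a (n+6) ^ 2 := by
    have hcc : somosC (n+4) = somosC (n+2) := by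
      have h2 : (n+4) % 2 = (n+2) % 2 := by omega
      simp [somosC, h2]
    have hne : a (n+2) * a (n+3) ≠ 0 := mul_ne_zero (by omega) (by omega)
    rw [hcc]
    refine mul_right_cancel₀ hne ?_
    linear_combination (a (n+4) * a (n+2)) * hS3 +
      (a (n+4) ^ 2 - somosC (n+2) * a (n+5) * a (n+3)) * hS2 +
      (a (n+5) * a (n+4) + a (n+6) * a (n+3)) * hR2
  -- assemble
  refine ⟨?_, ?_, ?_⟩
  · intro i hi
    interval_cases i
    · exact ⟨by simpa using hy1, by simpa using hp1⟩
    · exact ⟨by rw [show n+1+1 = n+2 by omega]; exact hy2,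
        by rw [show n+1+1 = n+2 by omega]; exact hp2⟩
    · exact ⟨by rw [show n+1+2 = n+3 by omega]; exact hy3,
        by rw [show n+1+2 = n+3 by omega]; exact hp3⟩
    · exact ⟨by rw [show n+1+3 = n+4 by omega]; exact hy4,
        by rw [show n+1+3 = n+4 by omega]; exact hp4⟩
    · exact ⟨by rw [show n+1+4 = n+5 by omega]; exact hy5,
        by rw [show n+1+4 = n+5 by omega]; exact hp5⟩
    · exact ⟨by rw [show n+1+5 = n+6 by omega]; exact hy6,
        by rw [show n+1+5 = n+6 by omega]; exact hp6⟩
    · exact ⟨by rw [show n+1+6 = n+7 by omega]; exact hy7,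
        by rw [show n+1+6 = n+7 by omega]; exact hp7⟩
    · exact ⟨by rw [show n+1+7 = n+8 by omega]; exact hy8 ▸ (by rw [ha8]),
        by rw [show n+1+7 = n+8 by omega]; exact hp8⟩
  · intro i j hij hj7 hj3
    rcases Nat.lt_or_ge j 7 with hj | hj
    · have e1 : n+1+i = n+(i+1) := by omega
      have e2 : n+1+j = n+(j+1) := by omega
      rw [e1, e2]
      exact hcop (i+1) (j+1) (by omega) (by omega) (by omega)
    · have hj' : j = 7 := by omega
      subst hj'
      rw [show n+1+7 = n+8 by omega]
      have hi4 : 4 ≤ i := by omega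
      interval_cases i
      · rw [show n+1+4 = n+5 by omega]; exact c58
      · rw [show n+1+5 = n+6 by omega]; exact c68
      · rw [show n+1+6 = n+7 by omega]; exact c78
  · intro i hi
    interval_cases i
    · have h := hR 1 (by norm_num)
      rw [show n+1+0+4 = n+1+4 by omega, show n+1+0 = n+1 by omega,
        show n+1+0+3 = n+1+3 by omega, show n+1+0+1 = n+1+1 by omega,
        show n+1+0+2 = n+1+2 by omega]
      exact h
    · have h := hR 2 (by norm_num)
      rw [show n+1+1+4 = n+2+4 by omega, show n+1+1 = n+2 by omega,
        show n+1+1+3 = n+2+3 by omega, show n+1+1+1 = n+2+1 by omega,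
        show n+1+1+2 = n+2+2 by omega]
      exact h
    · have h := hR 3 (by norm_num)
      rw [show n+1+2+4 = n+3+4 by omega, show n+1+2 = n+3 by omega,
        show n+1+2+3 = n+3+3 by omega, show n+1+2+1 = n+3+1 by omega,
        show n+1+2+2 = n+3+2 by omega]
      exact h
    · rw [show n+1+3+4 = n+8 by omega, show n+1+3 = n+4 by omega,
        show n+1+3+3 = n+7 by omega, show n+1+3+1 = n+5 by omega,
        show n+1+3+2 = n+6 by omega]
      exact hR4

/-- The Somos-5 sequence with initial values 1,1,1,1,1 consists of integers. -/
theorem somos5_integrality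
    (y : ℕ → ℚ)
    (hinit : ∀ i : ℕ, i < 5 → y i = 1)
    (hrec : ∀ k : ℕ,
      y (k + 5) = (y (k + 4) * y (k + 1) + y (k + 3) * y (k + 2)) / y k) :
    ∀ k : ℕ, ∃ z : ℤ, y k = z := by
  have h0 : y 0 = 1 := hinit 0 (by norm_num)
  have h1 : y 1 = 1 := hinit 1 (by norm_num)
  have h2 : y 2 = 1 := hinit 2 (by norm_num)
  have h3 : y 3 = 1 := hinit 3 (by norm_num)
  have h4 : y 4 = 1 := hinit 4 (by norm_num)
  have hy5 : y 5 = 2 := by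
    have h := hrec 0
    rw [h0, h1, h2, h3, h4] at h
    norm_num at h
    exact h
  have hy6 : y 6 = 3 := by
    have h := hrec 1
    rw [hy5, h1, h2, h3, h4] at h
    norm_num at h
    exact h
  have hy7 : y 7 = 5 := by
    have h := hrec 2
    rw [hy5, hy6, h2, h3, h4] at h
    norm_num at h
    exact h
  let a : ℕ → ℤ := fun m => (y m).num
  have ha : ∀ m : ℕ, ∀ z : ℤ, y m = (z : ℚ) → a m = z := by
    intro m z h
    show (y m).num = z
    rw [h, Rat.num_intCast]
  have a0 : a 0 = 1 := ha 0 1 (by rw [h0]; norm_num)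
  have a1 : a 1 = 1 := ha 1 1 (by rw [h1]; norm_num)
  have a2 : a 2 = 1 := ha 2 1 (by rw [h2]; norm_num)
  have a3 : a 3 = 1 := ha 3 1 (by rw [h3]; norm_num)
  have a4 : a 4 = 1 := ha 4 1 (by rw [h4]; norm_num)
  have a5 : a 5 = 2 := ha 5 2 (by rw [hy5]; norm_num)
  have a6 : a 6 = 3 := ha 6 3 (by rw [hy6]; norm_num)
  have a7 : a 7 = 5 := ha 7 5 (by rw [hy7]; norm_num)
  have base : SomosBig y a 0 := by
    refine ⟨?_, ?_, ?_⟩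
    · intro i hi
      interval_cases i <;> simp only [Nat.zero_add] <;>
        norm_num [a0, a1, a2, a3, a4, a5, a6, a7, h0, h1, h2, h3, h4, hy5, hy6, hy7]
    · intro i j hij hj7 hj3
      interval_cases j <;> interval_cases i <;> simp only [Nat.zero_add] <;>
        rw [Int.isCoprime_iff_gcd_eq_one] <;>
        norm_num [a0, a1, a2, a3, a4, a5, a6, a7]
    · intro i hi
      interval_cases i <;> simp only [Nat.zero_add] <;>
        norm_num [somosC, a0, a1, a2, a3, a4, a5, a6, a7]
  have main : ∀ n, SomosBig y a n := by
    intro n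
    induction n with
    | zero => exact base
    | succ k ih => exact somos_step y a ha hrec k ih
  intro k
  refine ⟨a k, ?_⟩
  simpa using ((main k).1 0 (by norm_num)).1
end

section
/- Fix ε ∈ {1,−1} and suppose y : ℤ≥0² → F satisfies the frieze recurrence y_{i,j} y_{i−1,j−1} = ε y_{i,j−1} y_{i−1,j} + β for i,j ≥ 1, with initial entries y_{a,b} (a = 0 or b = 0) independent indeterminates over ℤ[β]. Then every y_{i,j} is a Laurent polynomial in the initial entries with coefficients in ℤ[β]. -/
/-!
Comparing the frieze relation at `(i, j + 1)` and `(i, j + 2)` and eliminating `β` shows that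
`(y i (j + 2) + ε * y i j) / y i (j + 1)` only changes by the factor `ε` from one row to the next.
So every row obeys a three-term linear recurrence whose coefficients are Laurent polynomials in
the zeroth row, and the first column is obtained by dividing by the boundary entries `y i 0`.
This yields a Laurent polynomial solution `friezeOfBoundary` of the frieze relation. It is the
only solution with the given boundary as soon as its entries are nonzero, which is seen in the
Laurent polynomial ring by sending `β` to `0`, every boundary entry to `1` and reducing mod 2
(which turns `ε` into `1`): there it becomes the constant frieze `1`.
-/

open MvPolynomial

/-- Index set for the initial cluster of the frieze recurrence:
boundary pairs (a,b) ∈ ℤ≥0² with a = 0 or b = 0. -/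
def FriezeInit : Type := {p : ℕ × ℕ // p.1 = 0 ∨ p.2 = 0}

namespace FriezeInit

def col (i : ℕ) : FriezeInit := ⟨(i, 0), Or.inr rfl⟩

def row (j : ℕ) : FriezeInit := ⟨(0, j), Or.inl rfl⟩

end FriezeInit

open FriezeInit

section CommRing

variable {A B : Type*} [CommRing A] [CommRing B]

def IsFrieze (ε β : A) (y : ℕ → ℕ → A) : Prop :=
  ∀ i j, y (i + 1) (j + 1) * y i j = ε * (y (i + 1) j * y i (j + 1)) + β

theorem IsFrieze.eq_of_boundary_eq [IsDomain A] {ε β : A} {y z : ℕ → ℕ → A}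
    (hy : IsFrieze ε β y) (hz : IsFrieze ε β z) (hcol : ∀ i, y i 0 = z i 0)
    (hrow : ∀ j, y 0 j = z 0 j) (hz0 : ∀ i j, z i j ≠ 0) : y = z := by
  funext i
  induction i with
  | zero => exact funext hrow
  | succ i ihi =>
    funext j
    induction j with
    | zero => exact hcol (i + 1)
    | succ j ihj =>
      refine mul_right_cancel₀ (hz0 i j) ?_
      rw [← congrFun ihi j, hy i j, ihj, ihi, ← hz i j]

def friezeOfBoundary (ε β : A) (u : FriezeInit → Aˣ) : ℕ → ℕ → A
  | i, 0 => u (col i)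
  | 0, j + 1 => u (row (j + 1))
  | i + 1, 1 => (ε * (u (col (i + 1)) * friezeOfBoundary ε β u i 1) + β) * ↑(u (col i))⁻¹
  | i + 1, j + 2 =>
      ε ^ (i + 1) * ((u (row (j + 2)) + ε * u (row j)) * ↑(u (row (j + 1)))⁻¹) *
          friezeOfBoundary ε β u (i + 1) (j + 1)
        - ε * friezeOfBoundary ε β u (i + 1) j

variable (ε β : A) (u : FriezeInit → Aˣ)

@[simp]
theorem friezeOfBoundary_zero_right (i : ℕ) : friezeOfBoundary ε β u i 0 = u (col i) := by
  cases i <;> rw [friezeOfBoundary]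

@[simp]
theorem friezeOfBoundary_zero_left (j : ℕ) : friezeOfBoundary ε β u 0 j = u (row j) := by
  cases j with
  | zero => exact friezeOfBoundary_zero_right ε β u 0
  | succ j => rw [friezeOfBoundary]

theorem friezeOfBoundary_succ_one (i : ℕ) :
    friezeOfBoundary ε β u (i + 1) 1 =
      (ε * (u (col (i + 1)) * friezeOfBoundary ε β u i 1) + β) * ↑(u (col i))⁻¹ := by
  rw [friezeOfBoundary]

theorem friezeOfBoundary_add_two (i j : ℕ) :
    friezeOfBoundary ε β u i (j + 2) =
      ε ^ i * ((u (row (j + 2)) + ε * u (row j)) * ↑(u (row (j + 1)))⁻¹) *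
          friezeOfBoundary ε β u i (j + 1)
        - ε * friezeOfBoundary ε β u i j := by
  cases i with
  | zero => simp
  | succ i => rw [friezeOfBoundary]

theorem isFrieze_friezeOfBoundary (hε : ε * ε = 1) : IsFrieze ε β (friezeOfBoundary ε β u) := by
  intro i j
  induction j with
  | zero =>
    rw [friezeOfBoundary_succ_one, friezeOfBoundary_zero_right, friezeOfBoundary_zero_right,
      mul_assoc, Units.inv_mul, mul_one]
  | succ j ih =>
    rw [friezeOfBoundary_add_two ε β u (i + 1) j, friezeOfBoundary_add_two ε β u i j]
    linear_combination ih +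
      friezeOfBoundary ε β u (i + 1) (j + 1) * friezeOfBoundary ε β u i j * hε

theorem map_friezeOfBoundary (f : A →+* B) (i j : ℕ) :
    f (friezeOfBoundary ε β u i j) =
      friezeOfBoundary (f ε) (f β) (fun s => Units.map f (u s)) i j := by
  induction i, j using friezeOfBoundary.induct with
  | case1 i => simp
  | case2 j => simp
  | case3 i ih => simp [friezeOfBoundary_succ_one, ih]
  | case4 i j ih₁ ih₂ => simp [friezeOfBoundary_add_two _ _ _ (i + 1) j, ih₁, ih₂]

theorem friezeOfBoundary_one_zero_one (i j : ℕ) : friezeOfBoundary (1 : A) 0 1 i j = 1 := by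
  induction i, j using friezeOfBoundary.induct with
  | case1 i => simp
  | case2 j => simp
  | case3 i ih => simp [friezeOfBoundary_succ_one, ih]
  | case4 i j ih₁ ih₂ => rw [friezeOfBoundary_add_two, ih₁, ih₂]; simp

theorem friezeOfBoundary_mem {ε β : A} {u : FriezeInit → Aˣ} (S : Subring A) (hε : ε ∈ S)
    (hβ : β ∈ S) (hu : ∀ s, ↑(u s) ∈ S) (hu_inv : ∀ s, ↑(u s)⁻¹ ∈ S) (i j : ℕ) :
    friezeOfBoundary ε β u i j ∈ S := by
  induction i, j using friezeOfBoundary.induct with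
  | case1 i => simpa using hu _
  | case2 j => simpa using hu _
  | case3 i ih =>
    rw [friezeOfBoundary_succ_one]
    exact mul_mem (add_mem (mul_mem hε (mul_mem (hu _) ih)) hβ) (hu_inv _)
  | case4 i j ih₁ ih₂ =>
    rw [friezeOfBoundary_add_two]
    exact sub_mem (mul_mem (mul_mem (pow_mem hε _)
      (mul_mem (add_mem (hu _) (mul_mem hε (hu _))) (hu_inv _))) ih₁) (mul_mem hε ih₂)

end CommRing

section BoundaryIndeterminates

noncomputable abbrev boundaryMonomials : Submonoid (MvPolynomial (FriezeInit ⊕ Unit) ℤ) :=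
  Submonoid.closure (Set.range fun s : FriezeInit => X (Sum.inl s))

local notation "R" => MvPolynomial (FriezeInit ⊕ Unit) ℤ
local notation "L" => Localization boundaryMonomials

theorem boundaryMonomials_le_nonZeroDivisors : boundaryMonomials ≤ nonZeroDivisors R :=
  Submonoid.closure_le.mpr <| by
    rintro _ ⟨s, rfl⟩
    exact mem_nonZeroDivisors_of_ne_zero (X_ne_zero _)

noncomputable def laurentBoundary (s : FriezeInit) : Lˣ :=
  (IsLocalization.map_units L
    (⟨X (Sum.inl s), Submonoid.subset_closure ⟨s, rfl⟩⟩ : boundaryMonomials)).unit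

noncomputable def specialization : L →+* ZMod 2 :=
  IsLocalization.lift (M := boundaryMonomials)
    (g := eval₂Hom (Int.castRingHom (ZMod 2)) (Sum.elim 1 0)) fun m => by
      have hm : m.1 ∈ MonoidHom.mker (eval₂Hom (Int.castRingHom (ZMod 2)) (Sum.elim 1 0)) :=
        Submonoid.closure_le.mpr (by rintro _ ⟨s, rfl⟩; simp) m.2
      rw [MonoidHom.mem_mker] at hm
      simp [hm]

theorem friezeOfBoundary_laurent_ne_zero {ε : ℤ} (hε : Odd ε) (i j : ℕ) :
    friezeOfBoundary (ε : L) (algebraMap R L (X (Sum.inr ()))) laurentBoundary i j ≠ 0 := by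
  intro h
  have := congrArg specialization h
  rw [map_friezeOfBoundary, map_zero] at this
  have hu : (fun s => Units.map (specialization : L →* ZMod 2) (laurentBoundary s)) = 1 :=
    funext fun s => Units.ext <| by
      simp [laurentBoundary, specialization]
  have hβ : specialization (algebraMap R L (X (Sum.inr ()))) = 0 := by
    simp [specialization]
  rw [map_intCast, hε.intCast_zmod_two, hβ, hu, friezeOfBoundary_one_zero_one] at this
  exact one_ne_zero this

noncomputable def fractionBoundary (F : Type*) [Field F] [Algebra R F] [IsFractionRing R F]
    (s : FriezeInit) : Fˣ :=
  Units.mk0 (algebraMap R F (X (Sum.inl s)))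
    ((map_ne_zero_iff _ (IsFractionRing.injective R F)).mpr (X_ne_zero _))

theorem friezeOfBoundary_fractionBoundary_ne_zero {ε : ℤ} (hε : Odd ε) (F : Type*)
    [Field F] [Algebra R F] [IsFractionRing R F] (i j : ℕ) :
    friezeOfBoundary (ε : F) (algebraMap R F (X (Sum.inr ()))) (fractionBoundary F) i j ≠ 0 := by
  let ι : L →+* F := IsLocalization.lift (M := boundaryMonomials) (g := algebraMap R F)
    fun m => IsLocalization.map_units (M := nonZeroDivisors R) F
      ⟨m, boundaryMonomials_le_nonZeroDivisors m.2⟩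
  have hι : Function.Injective ι :=
    IsLocalization.lift_injective_iff _ |>.mpr fun a b => by
      simp only [(IsLocalization.injective L boundaryMonomials_le_nonZeroDivisors).eq_iff,
        (IsFractionRing.injective R F).eq_iff]
  have hu : (fun s => Units.map (ι : L →* F) (laurentBoundary s)) = fractionBoundary F :=
    funext fun s => Units.ext <| by
      simp [ι, laurentBoundary, fractionBoundary]
  have hβ : ι (algebraMap R L (X (Sum.inr ()))) = algebraMap R F (X (Sum.inr ())) :=
    IsLocalization.lift_eq _ _
  rw [← hu, ← map_intCast ι, ← hβ, ← map_friezeOfBoundary]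
  exact (map_ne_zero_iff ι hι).mpr (friezeOfBoundary_laurent_ne_zero hε i j)

end BoundaryIndeterminates

/-- The generalized frieze pattern recurrence
y_{i,j} y_{i−1,j−1} = ε y_{i,j−1} y_{i−1,j} + β, with ε ∈ {1,−1},
exhibits the Laurent phenomenon over ℤ[β]. -/
theorem frieze_recurrence_laurent
    (ε : ℤ) (hε : ε = 1 ∨ ε = -1)
    (F : Type*) [Field F] [Algebra (MvPolynomial (FriezeInit ⊕ Unit) ℤ) F]
    [IsFractionRing (MvPolynomial (FriezeInit ⊕ Unit) ℤ) F]
    (x : FriezeInit ⊕ Unit → F)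
    (hx : ∀ s, x s = algebraMap (MvPolynomial (FriezeInit ⊕ Unit) ℤ) F (X s))
    (β : F) (hβ : β = x (Sum.inr ()))
    (y : ℕ → ℕ → F)
    (hinit : ∀ a b : ℕ, ∀ h : a = 0 ∨ b = 0, y a b = x (Sum.inl ⟨(a, b), h⟩))
    (hrec : ∀ i j : ℕ,
      y (i + 1) (j + 1) * y i j = (ε : F) * (y (i + 1) j * y i (j + 1)) + β) :
    ∀ i j : ℕ, y i j ∈ Algebra.adjoin ℤ
      (Set.range (fun s : FriezeInit => x (Sum.inl s)) ∪
       Set.range (fun s : FriezeInit => (x (Sum.inl s))⁻¹) ∪ {β}) := by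
  obtain rfl : x = fun s => algebraMap _ F (X s) := funext hx
  subst hβ
  have hε_sq : (ε : F) * ε = 1 := by rcases hε with rfl | rfl <;> norm_num
  have hε_odd : Odd ε := by rcases hε with rfl | rfl <;> decide
  have hy : y = friezeOfBoundary (ε : F) _ (fractionBoundary F) :=
    IsFrieze.eq_of_boundary_eq hrec (isFrieze_friezeOfBoundary _ _ _ hε_sq)
      (fun i => by rw [friezeOfBoundary_zero_right]; exact hinit i 0 (Or.inr rfl))
      (fun j => by rw [friezeOfBoundary_zero_left]; exact hinit 0 j (Or.inl rfl))
      (friezeOfBoundary_fractionBoundary_ne_zero hε_odd F)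
  intro i j
  rw [hy]
  exact friezeOfBoundary_mem (Algebra.adjoin ℤ (_ : Set F)).toSubring (intCast_mem _ ε)
    (Algebra.subset_adjoin (Or.inr rfl))
    (fun s => Algebra.subset_adjoin (Or.inl (Or.inl ⟨s, rfl⟩)))
    (fun s => Algebra.subset_adjoin (Or.inl (Or.inr ⟨s, by simp [fractionBoundary]⟩))) i j
end

section
/- Let n ≥ 3, let P(x₁,…,xₙ) = Σᵢ xᵢ² + Σ_{i<j} α_{ij} xᵢ xⱼ with indeterminate coefficients α_{ij}, and define Fᵢ replacing the i-th coordinate xᵢ by (P|_{xᵢ=0})/xᵢ. Then for any finite sequence of indices i₁,…,i_m, the composition F_{i₁} ∘ ⋯ ∘ F_{i_m} is given coordinatewise by Laurent polynomials in x₁,…,xₙ with coefficients in ℤ[α_{ij} : i<j]. -/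
/-!
Along any exchange sequence the cluster `b` stays in the Laurent ring `ℤ[α][x^{±1}] ⊆ F` and
keeps two divisibilities: `∏ⱼ bⱼ ∣ P(b)` and `bₖ ∣ P(b|_{bₖ=0})` for every `k`; the second
makes the next exchange `bᵢ ↦ P(b|_{bᵢ=0}) / bᵢ` land in the Laurent ring again.
Since `P(b|_{bᵢ=t}) = t (t + Lᵢ) + P(b|_{bᵢ=0})` with `Lᵢ = crossCoeff A b i` is monic in `t`,
the old and new values `bᵢ, w` satisfy `P(b) / bᵢ = bᵢ + Lᵢ + w = P(b') / w`, so `P / ∏ⱼ bⱼ` is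
conserved; and for `k ≠ i` the change `P(b'|_{bₖ=0}) - P(b|_{bₖ=0}) = (w - bᵢ)(bᵢ + Lᵢ + w)` is
divisible by `bₖ`. Dividing by `bᵢ` is legitimate because specialising every `x` and `α` to `1`
makes all cluster variables positive.
-/

open MvPolynomial

theorem MvPolynomial.map_mem_adjoin_range_comp_X {σ S : Type*} [CommRing S]
    (f : MvPolynomial σ ℤ →+* S) (q : MvPolynomial σ ℤ) :
    f q ∈ Algebra.adjoin ℤ (Set.range (f ∘ X)) := by
  rw [Algebra.adjoin_range_eq_range_aeval]
  exact ⟨q, congrArg (· q) (aeval_unique f.toIntAlgHom).symm⟩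

theorem Localization.subalgebra.mem_of_mem_ofField_closure {A K : Type*} [CommRing A] [Field K]
    [Algebra A K] [IsFractionRing A K] {G : Set A} (hG : Submonoid.closure G ≤ nonZeroDivisors A)
    {S : Subring K} (hA : ∀ p, algebraMap A K p ∈ S) (hinv : ∀ g ∈ G, (algebraMap A K g)⁻¹ ∈ S)
    {y : K} (hy : y ∈ ofField K (Submonoid.closure G) hG) : y ∈ S := by
  obtain ⟨p, s, hs, rfl⟩ := hy
  have hclosure : Submonoid.closure G ≤
      S.toSubmonoid.comap (invMonoidHom.comp (algebraMap A K : A →* K)) :=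
    Submonoid.closure_le.mpr hinv
  exact mul_mem (hA p) (hclosure hs)

namespace QuadraticExchange

open Function Finset

abbrev Pairs (ι : Type*) [LT ι] : Type _ := {p : ι × ι // p.1 < p.2}

variable {ι : Type*} [LinearOrder ι]

section CommRing

variable {R : Type*} [CommRing R] (A : Pairs ι → R)

theorem sq_update (b : ι → R) (i j : ι) (t : R) :
    update b i t j ^ 2 = t * (if j = i then t else 0) + update b i 0 j ^ 2 := by
  rcases eq_or_ne j i with rfl | h <;> simp [*, sq]

theorem mul_update_mul_update (b : ι → R) (i : ι) (t : R) (p : Pairs ι) :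
    A p * update b i t p.1.1 * update b i t p.1.2 =
      t * (if p.1.1 = i then A p * b p.1.2 else if p.1.2 = i then A p * b p.1.1 else 0) +
        A p * update b i 0 p.1.1 * update b i 0 p.1.2 := by
  have hne : p.1.1 ≠ p.1.2 := p.2.ne
  rcases eq_or_ne p.1.1 i with h1 | h1 <;> rcases eq_or_ne p.1.2 i with h2 | h2
  · exact absurd (h1.trans h2.symm) hne
  all_goals simp [*] <;> ring

variable [Fintype ι]

def quadForm (b : ι → R) : R :=
  (∑ j, b j ^ 2) + ∑ p : Pairs ι, A p * b p.1.1 * b p.1.2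

def crossCoeff (b : ι → R) (i : ι) : R :=
  ∑ p : Pairs ι, if p.1.1 = i then A p * b p.1.2 else if p.1.2 = i then A p * b p.1.1 else 0

theorem map_quadForm {S : Type*} [CommRing S] (φ : R →+* S) (b : ι → R) :
    φ (quadForm A b) = quadForm (φ ∘ A) (φ ∘ b) := by
  simp [quadForm]

theorem map_crossCoeff {S : Type*} [CommRing S] (φ : R →+* S) (b : ι → R) (i : ι) :
    φ (crossCoeff A b i) = crossCoeff (φ ∘ A) (φ ∘ b) i := by
  simp [crossCoeff, apply_ite φ]

theorem quadForm_update (b : ι → R) (i : ι) (t : R) :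
    quadForm A (update b i t) = t * (t + crossCoeff A b i) + quadForm A (update b i 0) := by
  simp only [quadForm, crossCoeff, sq_update b i _ t, mul_update_mul_update A b i t,
    sum_add_distrib, ← mul_sum, sum_ite_eq', mem_univ, if_true]
  ring

theorem quadForm_update_sub (b : ι → R) (i : ι) (s t : R) :
    quadForm A (update b i t) - quadForm A (update b i s) =
      (t - s) * (t + s + crossCoeff A b i) := by
  rw [quadForm_update, quadForm_update A b i s]
  ring

theorem dvd_crossCoeff_sub_crossCoeff_update_zero (b : ι → R) (i k : ι) :
    b k ∣ crossCoeff A b i - crossCoeff A (update b k 0) i := by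
  set φ := Ideal.Quotient.mk (Ideal.span {b k})
  have hφ : φ ∘ update b k 0 = φ ∘ b := by
    ext j
    rcases eq_or_ne j k with rfl | h <;> simp [φ, *]
  rw [← Ideal.Quotient.eq_zero_iff_dvd, map_sub, map_crossCoeff, map_crossCoeff, hφ, sub_self]

structure IsSeed (b : ι → R) : Prop where
  prod_dvd_quadForm : ∏ j, b j ∣ quadForm A b
  dvd_quadForm_update_zero : ∀ k, b k ∣ quadForm A (update b k 0)

theorem isSeed_of_isUnit {b : ι → R} (hb : ∀ j, IsUnit (b j)) : IsSeed A b where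
  prod_dvd_quadForm := (IsUnit.prod_univ_iff.mpr hb).dvd
  dvd_quadForm_update_zero k := (hb k).dvd

theorem IsSeed.exchange [IsDomain R] {b : ι → R} (hb : IsSeed A b) {i : ι} (hbi : b i ≠ 0)
    {w : R} (hw : b i * w = quadForm A (update b i 0)) : IsSeed A (update b i w) := by
  have hP : ∀ t, quadForm A (update b i t) = t * (t + crossCoeff A b i) + b i * w := by
    rw [hw]; exact quadForm_update A b i
  have hself : quadForm A b = b i * (b i + crossCoeff A b i + w) := by
    rw [← update_eq_self i b, hP, update_eq_self]; ring
  have hdvd : ∏ j ∈ univ.erase i, b j ∣ b i + crossCoeff A b i + w := by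
    rw [← mul_dvd_mul_iff_left hbi, mul_prod_erase _ _ (mem_univ i), ← hself]
    exact hb.prod_dvd_quadForm
  constructor
  · rw [prod_update_of_mem (mem_univ i), ← erase_eq, hP,
      show w * (w + crossCoeff A b i) + b i * w = w * (b i + crossCoeff A b i + w) by ring]
    exact mul_dvd_mul_left w hdvd
  · intro k
    rcases eq_or_ne k i with rfl | hki
    · rw [update_idem, update_self, ← hw]
      exact dvd_mul_left w (b k)
    set c := update b k 0
    have hci : c i = b i := update_of_ne hki.symm 0 b
    have hsub := quadForm_update_sub A c i (c i) w
    rw [update_eq_self, hci] at hsub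
    rw [update_of_ne hki, update_comm hki.symm, eq_add_of_sub_eq hsub,
      show w + b i + crossCoeff A c i
        = (b i + crossCoeff A b i + w) - (crossCoeff A b i - crossCoeff A c i) by ring]
    exact dvd_add (dvd_mul_of_dvd_right (dvd_sub
      ((dvd_prod_of_mem b (mem_erase.mpr ⟨hki, mem_univ k⟩)).trans hdvd)
      (dvd_crossCoeff_sub_crossCoeff_update_zero A b i k)) _) (hb.dvd_quadForm_update_zero k)

end CommRing

section Ordered

variable [Fintype ι] {K : Type*} [CommRing K] [LinearOrder K] [IsStrictOrderedRing K]

theorem quadForm_pos {A : Pairs ι → K} (hA : ∀ p, 0 ≤ A p) {b : ι → K} (hb : ∀ j, 0 ≤ b j)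
    {j : ι} (hj : 0 < b j) : 0 < quadForm A b :=
  add_pos_of_pos_of_nonneg (sum_pos' (fun _ _ => sq_nonneg _) ⟨j, mem_univ j, pow_pos hj 2⟩)
    (sum_nonneg fun p _ => mul_nonneg (mul_nonneg (hA p) (hb _)) (hb _))

theorem pos_of_mul_eq_quadForm_update_zero [Nontrivial ι] {A : Pairs ι → K} (hA : ∀ p, 0 ≤ A p)
    {b : ι → K} (hb : ∀ j, 0 < b j) {i : ι} {w : K}
    (hw : b i * w = quadForm A (update b i 0)) : 0 < w := by
  obtain ⟨j, hj⟩ := exists_ne i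
  refine pos_of_mul_pos_right (hw ▸ quadForm_pos hA (fun k => ?_) (j := j) ?_) (hb i).le
  · rcases eq_or_ne k i with rfl | h
    · simp
    · simpa [h] using (hb k).le
  · simpa [hj] using hb j

end Ordered

section Field

variable [Fintype ι] {K : Type*} [Field K]

def mutate (a : Pairs ι → K) (i : ι) (v : ι → K) : ι → K :=
  update v i (quadForm a (update v i 0) / v i)

theorem comp_update_eq_mutate {R : Type*} [CommRing R] (φ : R →+* K) (A : Pairs ι → R)
    {b : ι → R} {i : ι} {w : R} (hbi : φ (b i) ≠ 0) (hw : b i * w = quadForm A (update b i 0)) :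
    φ ∘ update b i w = mutate (φ ∘ A) i (φ ∘ b) := by
  rw [mutate, comp_update, comp_apply]
  congr 1
  rw [eq_div_iff hbi, mul_comm, ← map_mul, hw, map_quadForm, comp_update, map_zero]

theorem exists_isSeed_comp_eq_foldr_mutate [Nontrivial ι] {R 𝕜 : Type*} [CommRing R]
    [CommRing 𝕜] [LinearOrder 𝕜] [IsStrictOrderedRing 𝕜] (φ : R →+* K) (hφ : Injective φ)
    (ψ : R →+* 𝕜) {A : Pairs ι → R} (hA : ∀ p, 0 ≤ ψ (A p)) {b₀ : ι → R} (hb₀ : IsSeed A b₀)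
    (hpos : ∀ j, 0 < ψ (b₀ j)) (l : List ι) :
    ∃ b : ι → R, IsSeed A b ∧ (∀ j, 0 < ψ (b j)) ∧
      φ ∘ b = l.foldr (mutate (φ ∘ A)) (φ ∘ b₀) := by
  have : IsDomain R := hφ.isDomain φ
  induction l with
  | nil => exact ⟨b₀, hb₀, hpos, rfl⟩
  | cons i l ih =>
    obtain ⟨b, hb, hbpos, hφb⟩ := ih
    obtain ⟨w, hw⟩ := hb.dvd_quadForm_update_zero i
    have hbi : b i ≠ 0 := fun h => (hbpos i).ne' (by rw [h, map_zero])
    refine ⟨update b i w, hb.exchange A hbi hw.symm, fun j => ?_, ?_⟩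
    · rcases eq_or_ne j i with rfl | hji
      · rw [update_self]
        refine pos_of_mul_eq_quadForm_update_zero (A := ψ ∘ A) (b := ψ ∘ b) (i := j) hA hbpos ?_
        rw [comp_apply, ← map_mul, ← hw, map_quadForm, comp_update, map_zero]
      · rw [update_of_ne hji]
        exact hbpos j
    · rw [List.foldr_cons, ← hφb]
      exact comp_update_eq_mutate φ A ((map_ne_zero_iff φ hφ).mpr hbi) hw.symm

end Field

end QuadraticExchange

namespace QuadraticExchange

variable {ι : Type*} [LinearOrder ι] [Fintype ι] [Nontrivial ι] {F : Type*} [Field F]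

local notation "ℤ[x,α]" => MvPolynomial (ι ⊕ Pairs ι) ℤ

theorem foldr_mutate_mem_adjoin [Algebra ℤ[x,α] F] [IsFractionRing ℤ[x,α] F] (l : List ι) (j : ι) :
    l.foldr (mutate fun p => algebraMap ℤ[x,α] F (X (Sum.inr p)))
        (fun i => algebraMap ℤ[x,α] F (X (Sum.inl i))) j ∈
      Algebra.adjoin ℤ (Set.range (algebraMap ℤ[x,α] F ∘ X) ∪
        Set.range fun i => (algebraMap ℤ[x,α] F (X (Sum.inl i)))⁻¹) := by
  let M := Submonoid.closure (Set.range fun i : ι => (X (Sum.inl i) : ℤ[x,α]))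
  have hM : M ≤ nonZeroDivisors ℤ[x,α] := Submonoid.closure_le.mpr <| by
    rintro _ ⟨i, rfl⟩
    exact mem_nonZeroDivisors_of_ne_zero (X_ne_zero _)
  let B := Localization.subalgebra.ofField F M hM
  let toB : ℤ[x,α] →+* B := algebraMap ℤ[x,α] B
  let ev : ℤ[x,α] →+* ℚ := (aeval fun _ => (1 : ℚ)).toRingHom
  have hev : ∀ s : M, IsUnit (ev s) := fun s =>
    (Submonoid.closure_le (S := (IsUnit.submonoid ℚ).comap ev)).mpr
      (by rintro _ ⟨i, rfl⟩; simp [ev]) s.2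
  let ψ : B →+* ℚ := IsLocalization.lift hev
  have hψ : ∀ q, ψ (toB q) = ev q := IsLocalization.lift_eq hev
  obtain ⟨b, -, -, hb⟩ := exists_isSeed_comp_eq_foldr_mutate B.val.toRingHom
    Subtype.val_injective ψ (A := fun p => toB (X (Sum.inr p))) (b₀ := fun j => toB (X (Sum.inl j)))
    (fun p => by simp [hψ, ev])
    (isSeed_of_isUnit _ fun j =>
      IsLocalization.map_units (M := M) B ⟨_, Submonoid.subset_closure ⟨j, rfl⟩⟩)
    (fun j => by simp [hψ, ev]) l
  refine congrFun hb j ▸ ?_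
  refine Localization.subalgebra.mem_of_mem_ofField_closure hM
    (S := (Algebra.adjoin ℤ _).toSubring)
    (fun q => Algebra.adjoin_mono Set.subset_union_left (map_mem_adjoin_range_comp_X _ q))
    ?_ (b j).2
  rintro _ ⟨i, rfl⟩
  exact Algebra.subset_adjoin (Or.inr ⟨i, rfl⟩)

end QuadraticExchange

open QuadraticExchange in
/-- The birational involutions associated with the quadratic form
P = Σ xᵢ² + Σ_{i<j} α_{ij} xᵢ xⱼ (with indeterminate coefficients α_{ij})
exhibit the Laurent phenomenon: every finite composition of the maps
Fᵢ : xᵢ ↦ (P|_{xᵢ=0})/xᵢ is given coordinatewise by Laurent polynomials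
in x₁,…,xₙ with coefficients in ℤ[α_{ij}]. -/
theorem quadratic_form_exchanges_laurent
    (n : ℕ) (hn : 3 ≤ n)
    (F : Type*) [Field F]
    [Algebra (MvPolynomial (Fin n ⊕ {p : Fin n × Fin n // p.1 < p.2}) ℤ) F]
    [IsFractionRing (MvPolynomial (Fin n ⊕ {p : Fin n × Fin n // p.1 < p.2}) ℤ) F]
    (x : Fin n → F) (a : {p : Fin n × Fin n // p.1 < p.2} → F)
    (hx : ∀ i, x i = algebraMap
      (MvPolynomial (Fin n ⊕ {p : Fin n × Fin n // p.1 < p.2}) ℤ) F (X (Sum.inl i)))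
    (ha : ∀ p, a p = algebraMap
      (MvPolynomial (Fin n ⊕ {p : Fin n × Fin n // p.1 < p.2}) ℤ) F (X (Sum.inr p)))
    (P : (Fin n → F) → F)
    (hP : ∀ v : Fin n → F,
      P v = (∑ i, v i ^ 2) + ∑ p : {p : Fin n × Fin n // p.1 < p.2},
        a p * v p.1.1 * v p.1.2)
    (step : Fin n → (Fin n → F) → (Fin n → F))
    (hstep : ∀ (i : Fin n) (v : Fin n → F),
      step i v = Function.update v i (P (Function.update v i 0) / v i)) :
    ∀ (l : List (Fin n)) (j : Fin n),
      (l.foldr step x) j ∈ Algebra.adjoin ℤ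
        (Set.range x ∪ Set.range (fun i => (x i)⁻¹) ∪ Set.range a) := by
  have : Nontrivial (Fin n) := Fin.nontrivial_iff_two_le.mpr (by omega)
  have hmutate : step = mutate a := by
    ext i v j
    rw [hstep, mutate, hP]
    rfl
  obtain rfl : x = _ := funext hx
  obtain rfl : a = _ := funext ha
  intro l j
  rw [hmutate]
  refine Algebra.adjoin_mono ?_ (foldr_mutate_mem_adjoin l j)
  rintro _ (⟨i | p, rfl⟩ | ⟨i, rfl⟩)
  · exact Or.inl (Or.inl ⟨i, rfl⟩)
  · exact Or.inr ⟨p, rfl⟩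
  · exact Or.inl (Or.inr ⟨i, rfl⟩)
end

section
/- Let P(x) and Q(x) be monic palindromic polynomials over ℤ[λ^{±1}, μ^{±1}, α₁,…, β₁,…] of degrees d and e: P(x) = (1+x^d) + α₁(x+x^{d−1}) + ⋯ and Q(x) = (1+x^e) + β₁(x+x^{e−1}) + ⋯. Define y₀, y₁ as indeterminates and y_k = μ² P(y_{k−1}/λ)/y_{k−2} for k odd, y_k = λ² Q(y_{k−1}/μ)/y_{k−2} for k even (k ≥ 2). Then every y_k is a Laurent polynomial in y₀, y₁ with coefficients in ℤ[λ^{±1}, μ^{±1}, α_i, β_j]. -/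
/-!
Work in the Laurent ring `L = ℤ[λ^±, μ^±, y₀^±, y₁^±, αᵢ, βⱼ]`, embedded in `F`. Suppose
`y₂ y₀ = μ² P(y₁/λ)` and `y₃ y₁ = λ² Q(y₂/μ)` with all `yᵢ ∈ L`. Modulo `y₂` the second relation
reads `y₁ y₃ ≡ λ² Q(0) = λ²`, so `y₃/λ` is the inverse of `y₁/λ`, and as `P` is palindromic,
`P(y₃/λ) ≡ (y₃/λ)^d P(y₁/λ) ≡ 0`. Hence `y₂ ∣ μ² P(y₃/λ)`, i.e. `y₄ ∈ L`; the same holds with the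
roles of `(λ, P)` and `(μ, Q)` exchanged. Dividing requires `yₖ ≠ 0`: under the specialisation of
`L` sending every variable to `1`, the recurrence only adds, multiplies and divides positive
numbers, so every `yₖ` specialises to a positive real.
-/

/-- Index type: two scaling parameters λ, μ; two initial variables y₀, y₁;
and two countable families of palindromic coefficients αᵢ, βⱼ. -/
def PalinVars : Type := Fin 2 ⊕ Fin 2 ⊕ ℕ ⊕ ℕ

section Reverse

open Polynomial

theorem Polynomial.dvd_eval_of_reverse_eq_self {T : Type*} [CommRing T] {p : T[X]}
    (hp : p.reverse = p) {c u v : T} (huv : c ∣ u * v - 1) (hu : c ∣ p.eval u) :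
    c ∣ p.eval v := by
  set π := Ideal.Quotient.mk (Ideal.span {c})
  have hπ : ∀ t, π t = 0 ↔ c ∣ t := fun t =>
    Ideal.Quotient.eq_zero_iff_mem.trans Ideal.mem_span_singleton
  have huv' : π u * π v = 1 := by
    rw [← map_mul, ← sub_eq_zero, ← map_one π, ← map_sub, hπ]
    exact huv
  let _ := invertibleOfRightInverse _ _ huv'
  have h := eval₂_reverse_mul_pow π (π u) p
  rw [hp, invOf_eq_right_inv huv', eval₂_at_apply, eval₂_at_apply, (hπ _).2 hu,
    (IsUnit.pow _ (isUnit_of_invertible (π u))).mul_left_eq_zero] at h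
  exact (hπ _).1 h

theorem dvd_recurrence_numerator {T : Type*} [CommRing T] {a b : Tˣ} {f g : T[X]}
    (hf : f.reverse = f) (hg : g.coeff 0 = 1) {z₀ z₁ z₂ z₃ : T}
    (h₂ : z₂ * z₀ = a ^ 2 * f.eval (z₁ * ↑b⁻¹))
    (h₃ : z₃ * z₁ = b ^ 2 * g.eval (z₂ * ↑a⁻¹)) :
    z₂ ∣ a ^ 2 * f.eval (z₃ * ↑b⁻¹) := by
  refine dvd_mul_of_dvd_right (dvd_eval_of_reverse_eq_self hf (u := z₁ * ↑b⁻¹) ?_ ?_) _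
  · have hg₀ : z₂ ∣ g.eval (z₂ * ↑a⁻¹) - g.eval 0 :=
      (dvd_mul_right z₂ (↑a⁻¹ : T)).trans (by simpa using sub_dvd_eval_sub (z₂ * ↑a⁻¹) 0 g)
    rw [← coeff_zero_eq_eval_zero, hg] at hg₀
    convert hg₀ using 1
    linear_combination (↑b⁻¹ : T) ^ 2 * h₃ + g.eval (z₂ * ↑a⁻¹) * (b * ↑b⁻¹ + 1) * b.mul_inv
  · rw [← (a ^ 2).dvd_mul_left, Units.val_pow_eq_pow_val, ← h₂]
    exact dvd_mul_right _ _

end Reverse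

section Palindromic

open Polynomial Finset

variable {R : Type*} [Semiring R]

def palindromicCoeff (d : ℕ) (c : ℕ → R) (i : ℕ) : R :=
  if i = 0 ∨ i = d then 1 else c (min i (d - i))

noncomputable def palindromicPoly (d : ℕ) (c : ℕ → R) : R[X] :=
  ∑ i ∈ range (d + 1), C (palindromicCoeff d c i) * X ^ i

theorem palindromicCoeff_sub (d : ℕ) (c : ℕ → R) {i : ℕ} (hi : i ≤ d) :
    palindromicCoeff d c (d - i) = palindromicCoeff d c i := by
  unfold palindromicCoeff
  by_cases h : i = 0 ∨ i = d
  · rw [if_pos h, if_pos (by omega)]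
  · rw [if_neg h, if_neg (by omega), Nat.sub_sub_self hi, min_comm]

theorem coeff_palindromicPoly (d : ℕ) (c : ℕ → R) (n : ℕ) :
    (palindromicPoly d c).coeff n = if n ≤ d then palindromicCoeff d c n else 0 := by
  simp [palindromicPoly, finsetSum_coeff]

theorem coeff_zero_palindromicPoly (d : ℕ) (c : ℕ → R) :
    (palindromicPoly d c).coeff 0 = 1 := by
  simp [coeff_palindromicPoly, palindromicCoeff]

theorem natDegree_palindromicPoly [Nontrivial R] (d : ℕ) (c : ℕ → R) :
    (palindromicPoly d c).natDegree = d :=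
  natDegree_eq_of_le_of_coeff_ne_zero
    (natDegree_le_iff_coeff_eq_zero.2 fun n hn => by simp [coeff_palindromicPoly, not_le.2 hn])
    (by simp [coeff_palindromicPoly, palindromicCoeff])

theorem reverse_palindromicPoly [Nontrivial R] (d : ℕ) (c : ℕ → R) :
    (palindromicPoly d c).reverse = palindromicPoly d c := by
  ext n
  rw [coeff_reverse, natDegree_palindromicPoly]
  by_cases hn : n ≤ d
  · rw [revAt_le hn, coeff_palindromicPoly, coeff_palindromicPoly, if_pos (Nat.sub_le d n),
      if_pos hn, palindromicCoeff_sub d c hn]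
  · rw [revAt_eq_self_of_lt (not_le.1 hn)]

theorem eval₂_palindromicPoly {S : Type*} [CommSemiring S] (f : R →+* S) (d : ℕ) (c : ℕ → R)
    (t : S) : (palindromicPoly d c).eval₂ f t =
      ∑ i ∈ range (d + 1), palindromicCoeff d (f ∘ c) i * t ^ i := by
  simp [palindromicPoly, eval₂_finsetSum, palindromicCoeff, apply_ite f]

theorem eval₂_palindromicPoly_pos {K : Type*} [CommSemiring K] [PartialOrder K]
    [IsStrictOrderedRing K] (f : R →+* K) (d : ℕ) {c : ℕ → R} (hc : ∀ j, 0 ≤ f (c j)) {t : K}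
    (ht : 0 ≤ t) : 0 < (palindromicPoly d c).eval₂ f t := by
  rw [eval₂_palindromicPoly]
  refine zero_lt_one.trans_le ?_
  convert single_le_sum (f := fun i => palindromicCoeff d (f ∘ c) i * t ^ i) (fun i _ => ?_)
    (mem_range.2 d.succ_pos) using 1
  · simp [palindromicCoeff]
  · refine mul_nonneg ?_ (pow_nonneg ht i)
    unfold palindromicCoeff
    split_ifs <;> simp [hc]

end Palindromic

section PositiveImage

open Polynomial

variable {L F K : Type*} [CommRing L] [Field F] [Field K] [LinearOrder K] [IsStrictOrderedRing K]

def IsPosImage (φ : L →+* F) (ε : L →+* K) (y : F) : Prop :=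
  ∃ z, φ z = y ∧ 0 < ε z

variable {φ : L →+* F} {ε : L →+* K}

theorem map_recurrence_numerator (a b : Lˣ) (f : L[X]) (z : L) :
    φ (a ^ 2 * f.eval (z * ↑b⁻¹)) = φ a ^ 2 * f.eval₂ φ (φ z / φ b) := by
  rw [map_mul, map_pow, ← eval₂_at_apply, map_mul, map_units_inv, div_eq_mul_inv]

theorem recurrence_numerator_pos (a : Lˣ) {b : Lˣ} (hb : 0 < ε b) {f : L[X]}
    (hf : ∀ t, 0 ≤ t → 0 < f.eval₂ ε t) {z : L} (hz : 0 ≤ ε z) :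
    0 < ε (a ^ 2 * f.eval (z * ↑b⁻¹)) := by
  rw [map_mul, map_pow, ← eval₂_at_apply, map_mul, map_units_inv]
  exact mul_pos (sq_pos_of_ne_zero (a.isUnit.map ε).ne_zero)
    (hf _ (mul_nonneg hz (inv_nonneg.2 hb.le)))

theorem isPosImage_div (hφ : Function.Injective φ) {z w : L} (hz : 0 < ε z) (hw : 0 < ε w)
    (h : z ∣ w) : IsPosImage φ ε (φ w / φ z) := by
  obtain ⟨c, rfl⟩ := h
  have hφz : φ z ≠ 0 := (map_ne_zero_iff φ hφ).2 (ne_zero_of_map hz.ne')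
  refine ⟨c, by rw [map_mul, mul_div_cancel_left₀ _ hφz], ?_⟩
  rw [map_mul] at hw
  exact pos_of_mul_pos_right hw hz.le

theorem IsPosImage.recurrence_of_unit (hφ : Function.Injective φ) (a : Lˣ) {b u : Lˣ}
    (hb : 0 < ε b) (hu : 0 < ε u) {f : L[X]} (hf : ∀ t, 0 ≤ t → 0 < f.eval₂ ε t) {y : F}
    (hy : IsPosImage φ ε y) : IsPosImage φ ε (φ a ^ 2 * f.eval₂ φ (y / φ b) / φ u) := by
  obtain ⟨z, rfl, hz⟩ := hy
  rw [← map_recurrence_numerator]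
  exact isPosImage_div hφ hu (recurrence_numerator_pos a hb hf hz.le) u.isUnit.dvd

theorem IsPosImage.recurrence (hφ : Function.Injective φ) {a b : Lˣ} (hb : 0 < ε b)
    {f g : L[X]} (hf : f.reverse = f) (hg : g.coeff 0 = 1) (hfε : ∀ t, 0 ≤ t → 0 < f.eval₂ ε t)
    {y₀ y₁ y₂ y₃ : F} (h₀ : IsPosImage φ ε y₀) (h₁ : IsPosImage φ ε y₁)
    (h₂ : IsPosImage φ ε y₂) (h₃ : IsPosImage φ ε y₃)
    (r₂ : y₂ = φ a ^ 2 * f.eval₂ φ (y₁ / φ b) / y₀)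
    (r₃ : y₃ = φ b ^ 2 * g.eval₂ φ (y₂ / φ a) / y₁) :
    IsPosImage φ ε (φ a ^ 2 * f.eval₂ φ (y₃ / φ b) / y₂) := by
  obtain ⟨z₀, rfl, hz₀⟩ := h₀
  obtain ⟨z₁, rfl, hz₁⟩ := h₁
  obtain ⟨z₂, rfl, hz₂⟩ := h₂
  obtain ⟨z₃, rfl, hz₃⟩ := h₃
  have hφz : ∀ {z}, 0 < ε z → φ z ≠ 0 := fun hz => (map_ne_zero_iff φ hφ).2 (ne_zero_of_map hz.ne')
  have e₂ : z₂ * z₀ = a ^ 2 * f.eval (z₁ * ↑b⁻¹) := hφ <| by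
    rw [map_mul, map_recurrence_numerator, r₂, div_mul_cancel₀ _ (hφz hz₀)]
  have e₃ : z₃ * z₁ = b ^ 2 * g.eval (z₂ * ↑a⁻¹) := hφ <| by
    rw [map_mul, map_recurrence_numerator, r₃, div_mul_cancel₀ _ (hφz hz₁)]
  rw [← map_recurrence_numerator]
  exact isPosImage_div hφ hz₂ (recurrence_numerator_pos a hb hfε hz₃.le)
    (dvd_recurrence_numerator hf hg e₂ e₃)

theorem isPosImage_of_alternating (hφ : Function.Injective φ) {ℓ μ u₀ u₁ : Lˣ}
    (hℓ : 0 < ε ℓ) (hμ : 0 < ε μ) (hu₀ : 0 < ε u₀) (hu₁ : 0 < ε u₁) {p q : L[X]}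
    (hp : p.reverse = p) (hq : q.reverse = q) (hp₀ : p.coeff 0 = 1) (hq₀ : q.coeff 0 = 1)
    (hpε : ∀ t, 0 ≤ t → 0 < p.eval₂ ε t) (hqε : ∀ t, 0 ≤ t → 0 < q.eval₂ ε t) {y : ℕ → F}
    (hy₀ : y 0 = φ u₀) (hy₁ : y 1 = φ u₁)
    (hodd : ∀ k, Odd (k + 2) → y (k + 2) = φ μ ^ 2 * p.eval₂ φ (y (k + 1) / φ ℓ) / y k)
    (heven : ∀ k, Even (k + 2) → y (k + 2) = φ ℓ ^ 2 * q.eval₂ φ (y (k + 1) / φ μ) / y k) :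
    ∀ k, IsPosImage φ ε (y k) := by
  have h₀ : IsPosImage φ ε (y 0) := ⟨u₀, hy₀.symm, hu₀⟩
  have h₁ : IsPosImage φ ε (y 1) := ⟨u₁, hy₁.symm, hu₁⟩
  have h₂ : IsPosImage φ ε (y 2) := by
    rw [heven 0 even_two, hy₀]
    exact h₁.recurrence_of_unit hφ ℓ hμ hu₀ hqε
  have h₃ : IsPosImage φ ε (y 3) := by
    rw [hodd 1 (by decide), hy₁]
    exact h₂.recurrence_of_unit hφ μ hℓ hu₁ hpε
  intro k
  induction k using Nat.strong_induction_on with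
  | _ k ih =>
    match k, ih with
    | 0, _ => exact h₀
    | 1, _ => exact h₁
    | 2, _ => exact h₂
    | 3, _ => exact h₃
    | k + 4, ih =>
      have window := fun i (hi : i < 4) => ih (k + i) (by omega)
      rcases Nat.even_or_odd k with hk | hk
      · rw [heven (k + 2) (by simpa [parity_simps] using hk)]
        exact (window 0 (by omega)).recurrence hφ hμ hq hp₀ hqε (window 1 (by omega))
          (window 2 (by omega)) (window 3 (by omega)) (heven k (by simpa [parity_simps] using hk))
          (hodd (k + 1) (by simpa [parity_simps] using hk))
      · rw [hodd (k + 2) (by simpa [parity_simps] using hk)]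
        exact (window 0 (by omega)).recurrence hφ hℓ hp hq₀ hpε (window 1 (by omega))
          (window 2 (by omega)) (window 3 (by omega)) (hodd k (by simpa [parity_simps] using hk))
          (heven (k + 1) (by simpa [parity_simps] using hk))

end PositiveImage

theorem MvPolynomial.map_mem_of_map_X_mem {σ F M : Type*} [CommRing F] [SetLike M F]
    [SubringClass M F] {S : M} (φ : MvPolynomial σ ℤ →+* F) (hX : ∀ s, φ (X s) ∈ S)
    (r : MvPolynomial σ ℤ) : φ r ∈ S := by
  induction r using MvPolynomial.induction_on with
  | C a => simp
  | add p q hp hq => rw [map_add]; exact add_mem hp hq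
  | mul_X p s hp => rw [map_mul]; exact mul_mem hp (hX s)

section LocalizationAway

variable {R L F : Type*} [CommRing R] [CommRing L] [Algebra R L] {g : R}
  [IsLocalization.Away g L]

theorem IsLocalization.Away.lift_injective [IsDomain R] [CommRing F] (hg : g ≠ 0)
    {φ : R →+* F} (hφ : Function.Injective φ) (hu : IsUnit (φ g)) :
    Function.Injective (lift g hu : L →+* F) := by
  refine (IsLocalization.lift_injective_iff _).2 fun a b => ?_
  rw [(IsLocalization.injective L (powers_le_nonZeroDivisors_of_noZeroDivisors hg)).eq_iff,
    hφ.eq_iff]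

theorem IsLocalization.Away.lift_mem [Field F] {M : Type*} [SetLike M F] [SubmonoidClass M F]
    {S : M} {φ : R →+* F} (hu : IsUnit (φ g)) (hφ : ∀ r, φ r ∈ S) (hg : (φ g)⁻¹ ∈ S) (z : L) :
    lift g hu z ∈ S := by
  obtain ⟨n, r, hr⟩ := surj g z
  have h := congrArg (lift g hu) hr
  rw [map_mul, map_pow, lift_eq, lift_eq] at h
  rw [eq_div_of_mul_eq (pow_ne_zero n hu.ne_zero) h, div_eq_mul_inv, ← inv_pow]
  exact mul_mem (hφ r) (pow_mem hg n)

end LocalizationAway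

open MvPolynomial

namespace PalinVars

local notation "𝓡" => MvPolynomial PalinVars ℤ

def invertedVar : Fin 2 ⊕ Fin 2 → PalinVars
  | Sum.inl i => Sum.inl i
  | Sum.inr i => Sum.inr (Sum.inl i)

noncomputable def invertedMonomial : 𝓡 := ∏ j, X (invertedVar j)

abbrev Laurent : Type := Localization.Away invertedMonomial

theorem invertedMonomial_ne_zero : invertedMonomial ≠ 0 :=
  Finset.prod_ne_zero_iff.2 fun _ _ => X_ne_zero _

instance : IsDomain Laurent :=
  IsLocalization.isDomain_localization
    (powers_le_nonZeroDivisors_of_noZeroDivisors invertedMonomial_ne_zero)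

noncomputable def var (s : PalinVars) : Laurent := algebraMap 𝓡 Laurent (X s)

noncomputable def unitX (j : Fin 2 ⊕ Fin 2) : Laurentˣ :=
  (IsLocalization.Away.isUnit_of_dvd (S := Laurent) invertedMonomial
    (Finset.dvd_prod_of_mem (fun j => X (invertedVar j)) (Finset.mem_univ j))).unit

theorem val_unitX (j : Fin 2 ⊕ Fin 2) : (unitX j : Laurent) = var (invertedVar j) :=
  IsUnit.unit_spec _

noncomputable def evalOne : Laurent →+* ℝ :=
  IsLocalization.Away.lift invertedMonomial (g := eval₂Hom (Int.castRingHom ℝ) fun _ => 1)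
    (by simp [invertedMonomial])

theorem evalOne_var_pos (s : PalinVars) : 0 < evalOne (var s) := by
  simp [evalOne, var]

theorem evalOne_unitX_pos (j : Fin 2 ⊕ Fin 2) : 0 < evalOne (unitX j) :=
  val_unitX j ▸ evalOne_var_pos _

variable (F : Type*) [Field F] [Algebra 𝓡 F] [IsFractionRing 𝓡 F]

theorem isUnit_algebraMap_invertedMonomial : IsUnit (algebraMap 𝓡 F invertedMonomial) :=
  ((map_ne_zero_iff _ (IsFractionRing.injective _ F)).2 invertedMonomial_ne_zero).isUnit

noncomputable def embedding : Laurent →+* F :=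
  IsLocalization.Away.lift invertedMonomial (isUnit_algebraMap_invertedMonomial F)

theorem embedding_injective : Function.Injective (embedding F) :=
  IsLocalization.Away.lift_injective invertedMonomial_ne_zero (IsFractionRing.injective _ F) _

theorem embedding_var (s : PalinVars) : embedding F (var s) = algebraMap 𝓡 F (X s) :=
  IsLocalization.Away.lift_eq _ _ _

theorem embedding_mem {M : Type*} [SetLike M F] [SubringClass M F] {S : M}
    (hX : ∀ s, algebraMap 𝓡 F (X s) ∈ S)
    (hinv : ∀ j, (algebraMap 𝓡 F (X (invertedVar j)))⁻¹ ∈ S) (z : Laurent) :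
    embedding F z ∈ S := by
  refine IsLocalization.Away.lift_mem _ (map_mem_of_map_X_mem _ hX) ?_ z
  rw [invertedMonomial, map_prod, ← Finset.prod_inv_distrib]
  exact prod_mem fun j _ => hinv j

theorem embedding_mem_adjoin {x : PalinVars → F} (hx : ∀ s, x s = algebraMap 𝓡 F (X s))
    (z : Laurent) : embedding F z ∈ Algebra.adjoin ℤ
      (Set.range (fun i => x (Sum.inr (Sum.inl i)))
        ∪ Set.range (fun i => (x (Sum.inr (Sum.inl i)))⁻¹)
        ∪ {x (Sum.inl 0), (x (Sum.inl 0))⁻¹, x (Sum.inl 1), (x (Sum.inl 1))⁻¹}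
        ∪ Set.range (fun k => x (Sum.inr (Sum.inr (Sum.inl k))))
        ∪ Set.range (fun k => x (Sum.inr (Sum.inr (Sum.inr k))))) := by
  refine embedding_mem F (fun s => Algebra.subset_adjoin ?_) (fun j => Algebra.subset_adjoin ?_) z
  · rw [← hx]
    rcases s with (i | i | k | k)
    · fin_cases i <;> simp
    all_goals simp
  · rw [← hx]
    rcases j with (i | i) <;> fin_cases i <;> simp [invertedVar]

end PalinVars

open PalinVars

theorem palindromic_recurrence_laurent_general
    (d e : ℕ)
    (F : Type*) [Field F] [Algebra (MvPolynomial PalinVars ℤ) F]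
    [IsFractionRing (MvPolynomial PalinVars ℤ) F]
    (x : PalinVars → F)
    (hx : ∀ s, x s = algebraMap (MvPolynomial PalinVars ℤ) F (X s))
    (lam mu : F) (hlam : lam = x (Sum.inl 0)) (hmu : mu = x (Sum.inl 1))
    (Y : Fin 2 → F) (hY : ∀ i, Y i = x (Sum.inr (Sum.inl i)))
    (A B : ℕ → F)
    (hA : ∀ k, A k = x (Sum.inr (Sum.inr (Sum.inl k))))
    (hB : ∀ k, B k = x (Sum.inr (Sum.inr (Sum.inr k))))
    (P Q : F → F)
    (hP : ∀ t : F, P t = ∑ i ∈ Finset.range (d + 1),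
      (if i = 0 ∨ i = d then 1 else A (min i (d - i))) * t ^ i)
    (hQ : ∀ t : F, Q t = ∑ i ∈ Finset.range (e + 1),
      (if i = 0 ∨ i = e then 1 else B (min i (e - i))) * t ^ i)
    (y : ℕ → F)
    (hy0 : y 0 = Y 0) (hy1 : y 1 = Y 1)
    (hodd : ∀ k : ℕ, Odd (k + 2) → y (k + 2) = mu ^ 2 * P (y (k + 1) / lam) / y k)
    (heven : ∀ k : ℕ, Even (k + 2) → y (k + 2) = lam ^ 2 * Q (y (k + 1) / mu) / y k) :
    ∀ k : ℕ, y k ∈ Algebra.adjoin ℤ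
      (Set.range Y ∪ Set.range (fun i => (Y i)⁻¹)
        ∪ {lam, lam⁻¹, mu, mu⁻¹} ∪ Set.range A ∪ Set.range B) := by
  obtain rfl : Y = fun i => x (Sum.inr (Sum.inl i)) := funext hY
  obtain rfl : A = fun k => x (Sum.inr (Sum.inr (Sum.inl k))) := funext hA
  obtain rfl : B = fun k => x (Sum.inr (Sum.inr (Sum.inr k))) := funext hB
  subst hlam hmu
  have hφ : ∀ s, embedding F (var s) = x s := fun s => (embedding_var F s).trans (hx s).symm
  have hφu : ∀ j, embedding F (unitX j) = x (invertedVar j) := fun j => by rw [val_unitX, hφ]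
  set α := fun k => var (Sum.inr (Sum.inr (Sum.inl k)))
  set β := fun k => var (Sum.inr (Sum.inr (Sum.inr k)))
  have hP' : ∀ t, P t = (palindromicPoly d α).eval₂ (embedding F) t := fun t => by
    rw [hP, eval₂_palindromicPoly, show embedding F ∘ α = _ from funext fun _ => hφ _]; rfl
  have hQ' : ∀ t, Q t = (palindromicPoly e β).eval₂ (embedding F) t := fun t => by
    rw [hQ, eval₂_palindromicPoly, show embedding F ∘ β = _ from funext fun _ => hφ _]; rfl
  have key := isPosImage_of_alternating (embedding_injective F) (y := y)
    (evalOne_unitX_pos (.inl 0)) (evalOne_unitX_pos (.inl 1))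
    (evalOne_unitX_pos (.inr 0)) (evalOne_unitX_pos (.inr 1))
    (reverse_palindromicPoly d _) (reverse_palindromicPoly e _)
    (coeff_zero_palindromicPoly d _) (coeff_zero_palindromicPoly e _)
    (fun _ => eval₂_palindromicPoly_pos _ d fun _ => (evalOne_var_pos _).le)
    (fun _ => eval₂_palindromicPoly_pos _ e fun _ => (evalOne_var_pos _).le)
    (by rw [hy0, hφu]; rfl) (by rw [hy1, hφu]; rfl)
    (fun k hk => by rw [hodd k hk, hP', hφu, hφu]; rfl)
    (fun k hk => by rw [heven k hk, hQ', hφu, hφu]; rfl)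
  intro k
  obtain ⟨z, hz, -⟩ := key k
  exact hz ▸ embedding_mem_adjoin F hx z

/-- The alternating rank-2 recurrence built from two monic palindromic
polynomials P (degree d) and Q (degree e),
  y_k = μ² P(y_{k−1}/λ)/y_{k−2} (k odd),  y_k = λ² Q(y_{k−1}/μ)/y_{k−2} (k even),
exhibits the Laurent phenomenon over ℤ[λ^{±1}, μ^{±1}, αᵢ, βⱼ]. -/
theorem palindromic_recurrence_laurent
    (d e : ℕ) (hd : 0 < d) (he : 0 < e)
    (F : Type*) [Field F] [Algebra (MvPolynomial PalinVars ℤ) F]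
    [IsFractionRing (MvPolynomial PalinVars ℤ) F]
    (x : PalinVars → F)
    (hx : ∀ s, x s = algebraMap (MvPolynomial PalinVars ℤ) F (X s))
    (lam mu : F) (hlam : lam = x (Sum.inl 0)) (hmu : mu = x (Sum.inl 1))
    (Y : Fin 2 → F) (hY : ∀ i, Y i = x (Sum.inr (Sum.inl i)))
    (A B : ℕ → F)
    (hA : ∀ k, A k = x (Sum.inr (Sum.inr (Sum.inl k))))
    (hB : ∀ k, B k = x (Sum.inr (Sum.inr (Sum.inr k))))
    (P Q : F → F)
    (hP : ∀ t : F, P t = ∑ i ∈ Finset.range (d + 1),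
      (if i = 0 ∨ i = d then 1 else A (min i (d - i))) * t ^ i)
    (hQ : ∀ t : F, Q t = ∑ i ∈ Finset.range (e + 1),
      (if i = 0 ∨ i = e then 1 else B (min i (e - i))) * t ^ i)
    (y : ℕ → F)
    (hy0 : y 0 = Y 0) (hy1 : y 1 = Y 1)
    (hodd : ∀ k : ℕ, Odd (k + 2) → y (k + 2) = mu ^ 2 * P (y (k + 1) / lam) / y k)
    (heven : ∀ k : ℕ, Even (k + 2) → y (k + 2) = lam ^ 2 * Q (y (k + 1) / mu) / y k) :
    ∀ k : ℕ, y k ∈ Algebra.adjoin ℤ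
      (Set.range Y ∪ Set.range (fun i => (Y i)⁻¹)
        ∪ {lam, lam⁻¹, mu, mu⁻¹} ∪ Set.range A ∪ Set.range B) :=
  palindromic_recurrence_laurent_general d e F x hx lam mu hlam hmu Y hY A B hA hB P Q hP hQ y hy0
    hy1 hodd heven
end

section
/- Let c, d be indeterminates and let y : ℕ → ℚ(c,d,y₀,y₁) satisfy y(k) = (y(k−1)² + c·y(k−1) + d)/y(k−2) for k ≥ 2, with y(0) = y₀, y(1) = y₁ indeterminates. Then every y(k) is a Laurent polynomial in y₀, y₁ with coefficients in ℤ[c,d]. -/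
/-!
The quantity `(a² + b² + c(a + b) + d) / (ab)` takes the same value `J` on every pair
`(y k, y (k + 1))` of consecutive terms, so the recurrence linearises to
`y (k + 2) = J y (k + 1) - y k - c` with `J ∈ ℤ[c, d, y₀^±1, y₁^±1]`. Dividing by `y k` is
harmless because no term vanishes: `t² + ct + d` has no root in `ℚ(c, d, y₀, y₁)`. Indeed, writing
`t = p / q` and viewing `p, q` as polynomials in `d`, the relation `p (p + cq) = -d q²` is
impossible, since the right side has odd degree `2 deg q + 1` while the left side has degree
`2 deg p` if `deg p > deg q` and at most `2 deg q` otherwise.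
-/

open Polynomial in
theorem Polynomial.sq_add_C_mul_mul_add_X_mul_sq_ne_zero {A : Type*} [CommRing A] [IsDomain A]
    (c : A) {p q : A[X]} (hq : q ≠ 0) : p ^ 2 + C c * p * q + X * q ^ 2 ≠ 0 := by
  intro h
  have hfactor : p * (p + C c * q) = -(X * q ^ 2) := by linear_combination h
  have hrhs : -(X * q ^ 2) ≠ 0 := neg_ne_zero.mpr (mul_ne_zero X_ne_zero (pow_ne_zero 2 hq))
  have hp : p ≠ 0 := by rintro rfl; simp_all
  have hpq : p + C c * q ≠ 0 := by rintro hpq; simp_all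
  have hdeg := congrArg natDegree hfactor
  rw [natDegree_mul hp hpq, natDegree_neg, natDegree_X_mul (pow_ne_zero 2 hq),
    natDegree_pow] at hdeg
  have hle : (p + C c * q).natDegree ≤ max p.natDegree q.natDegree :=
    (natDegree_add_le _ _).trans (max_le_max le_rfl (natDegree_C_mul_le c q))
  rcases lt_or_ge q.natDegree p.natDegree with hlt | hge
  · rw [natDegree_add_eq_left_of_natDegree_lt ((natDegree_C_mul_le c q).trans_lt hlt)] at hdeg
    omega
  · omega

namespace MvPolynomial

variable {σ R : Type*} [CommRing R] [IsDomain R]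

theorem sq_add_X_mul_mul_add_X_mul_sq_ne_zero {i j : σ} (hij : i ≠ j)
    {p q : MvPolynomial σ R} (hq : q ≠ 0) : p ^ 2 + X j * p * q + X i * q ^ 2 ≠ 0 := by
  classical
  let e : MvPolynomial σ R ≃ₐ[R] Polynomial (MvPolynomial {k // k ≠ i} R) :=
    (renameEquiv R (Equiv.optionSubtypeNe i).symm).trans (optionEquivLeft R _)
  have hXi : e (X i) = Polynomial.X := by
    simp [e, optionEquivLeft_X_none]
  have hXj : e (X j) = Polynomial.C (X ⟨j, hij.symm⟩) := by
    simp [e, Equiv.optionSubtypeNe_symm_of_ne hij.symm, optionEquivLeft_X_some]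
  intro h
  apply Polynomial.sq_add_C_mul_mul_add_X_mul_sq_ne_zero (X ⟨j, hij.symm⟩)
    ((map_ne_zero_iff e e.injective).mpr hq)
  simpa [hXi, hXj] using congrArg e h

variable {F : Type*} [Field F] [Algebra (MvPolynomial σ R) F] [IsFractionRing (MvPolynomial σ R) F]

theorem sq_add_algebraMap_X_mul_add_algebraMap_X_ne_zero {i j : σ} (hij : i ≠ j) (t : F) :
    t ^ 2 + algebraMap (MvPolynomial σ R) F (X j) * t + algebraMap (MvPolynomial σ R) F (X i) ≠
      0 := by
  obtain ⟨p, q, hq, rfl⟩ := IsFractionRing.div_surjective (MvPolynomial σ R) t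
  have hq0 : q ≠ 0 := nonZeroDivisors.ne_zero hq
  have hqF : algebraMap _ F q ≠ 0 := IsFractionRing.to_map_ne_zero_of_mem_nonZeroDivisors hq
  intro h
  apply sq_add_X_mul_mul_add_X_mul_sq_ne_zero (p := p) hij hq0
  rw [← IsFractionRing.to_map_eq_zero_iff (R := MvPolynomial σ R) (K := F)]
  field_simp at h
  simp only [map_add, map_mul, map_pow]
  linear_combination h

end MvPolynomial

theorem mem_of_linear_recurrence {K S : Type*} [CommRing K] [SetLike S K] [SubringClass S K]
    (s : S) {a b : K} {y : ℕ → K} (ha : a ∈ s) (hb : b ∈ s) (h0 : y 0 ∈ s) (h1 : y 1 ∈ s)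
    (hlin : ∀ k, y (k + 2) = a * y (k + 1) - y k - b) : ∀ k, y k ∈ s
  | 0 => h0
  | 1 => h1
  | k + 2 => by
    rw [hlin]
    exact sub_mem (sub_mem (mul_mem ha (mem_of_linear_recurrence s ha hb h0 h1 hlin (k + 1)))
      (mem_of_linear_recurrence s ha hb h0 h1 hlin k)) hb

section RecurrenceInvariant

variable {K : Type*} [Field K]

def recurrenceInvariant (c d a b : K) : K := (a ^ 2 + b ^ 2 + c * (a + b) + d) / (a * b)

theorem recurrenceInvariant_mem {S : Type*} [SetLike S K] [SubringClass S K] (s : S)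
    {c d a b : K} (hc : c ∈ s) (hd : d ∈ s) (ha : a ∈ s) (hb : b ∈ s) (ha' : a⁻¹ ∈ s)
    (hb' : b⁻¹ ∈ s) : recurrenceInvariant c d a b ∈ s := by
  rw [recurrenceInvariant, div_eq_mul_inv, mul_inv]
  exact mul_mem (add_mem (add_mem (add_mem (pow_mem ha 2) (pow_mem hb 2))
    (mul_mem hc (add_mem ha hb))) hd) (mul_mem ha' hb')

variable {c d : K} {y : ℕ → K}

theorem ne_zero_of_recurrence (hrec : ∀ k, y (k + 2) = (y (k + 1) ^ 2 + c * y (k + 1) + d) / y k)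
    (hroot : ∀ t, t ^ 2 + c * t + d ≠ 0) (h0 : y 0 ≠ 0) (h1 : y 1 ≠ 0) : ∀ k, y k ≠ 0
  | 0 => h0
  | 1 => h1
  | k + 2 => by
    rw [hrec]
    exact div_ne_zero (hroot _) (ne_zero_of_recurrence hrec hroot h0 h1 k)

theorem recurrenceInvariant_eq (hrec : ∀ k, y (k + 2) = (y (k + 1) ^ 2 + c * y (k + 1) + d) / y k)
    (hne : ∀ k, y k ≠ 0) :
    ∀ k, recurrenceInvariant c d (y k) (y (k + 1)) = recurrenceInvariant c d (y 0) (y 1)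
  | 0 => rfl
  | k + 1 => by
    rw [← recurrenceInvariant_eq hrec hne k, recurrenceInvariant, recurrenceInvariant,
      div_eq_div_iff (mul_ne_zero (hne _) (hne _)) (mul_ne_zero (hne _) (hne _))]
    have hmul : y (k + 2) * y k = y (k + 1) ^ 2 + c * y (k + 1) + d := by
      rw [hrec, div_mul_cancel₀ _ (hne k)]
    linear_combination (y (k + 1) * (y (k + 2) - y k)) * hmul

theorem eq_recurrenceInvariant_mul_sub_sub
    (hrec : ∀ k, y (k + 2) = (y (k + 1) ^ 2 + c * y (k + 1) + d) / y k) (hne : ∀ k, y k ≠ 0)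
    (k : ℕ) : y (k + 2) = recurrenceInvariant c d (y 0) (y 1) * y (k + 1) - y k - c := by
  rw [← recurrenceInvariant_eq hrec hne k, recurrenceInvariant, hrec]
  field_simp [hne k, hne (k + 1)]
  ring

end RecurrenceInvariant

open MvPolynomial

/-- The recurrence y_k y_{k−2} = y_{k−1}² + c y_{k−1} + d exhibits the
Laurent phenomenon over ℤ[c,d]. -/
theorem quadratic_plus_linear_laurent
    (F : Type*) [Field F] [Algebra (MvPolynomial (Fin 2 ⊕ Fin 2) ℤ) F]
    [IsFractionRing (MvPolynomial (Fin 2 ⊕ Fin 2) ℤ) F]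
    (x : Fin 2 ⊕ Fin 2 → F)
    (hx : ∀ s, x s = algebraMap (MvPolynomial (Fin 2 ⊕ Fin 2) ℤ) F (X s))
    (c d : F) (hc : c = x (Sum.inr 0)) (hd : d = x (Sum.inr 1))
    (y : ℕ → F)
    (hy0 : y 0 = x (Sum.inl 0)) (hy1 : y 1 = x (Sum.inl 1))
    (hrec : ∀ k : ℕ, y (k + 2) = (y (k + 1) ^ 2 + c * y (k + 1) + d) / y k) :
    ∀ k : ℕ, y k ∈ Algebra.adjoin ℤ
      ({x (Sum.inl 0), x (Sum.inl 1), (x (Sum.inl 0))⁻¹, (x (Sum.inl 1))⁻¹, c, d}) := by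
  have hx_ne_zero : ∀ s, x s ≠ 0 := fun s => by
    rw [hx]
    exact IsFractionRing.to_map_ne_zero_of_mem_nonZeroDivisors
      (mem_nonZeroDivisors_of_ne_zero (X_ne_zero s))
  have hroot : ∀ t, t ^ 2 + c * t + d ≠ 0 := by
    rw [hc, hd, hx, hx]
    exact sq_add_algebraMap_X_mul_add_algebraMap_X_ne_zero (by decide)
  have hne := ne_zero_of_recurrence hrec hroot (hy0 ▸ hx_ne_zero _) (hy1 ▸ hx_ne_zero _)
  rw [← hy0, ← hy1]
  refine mem_of_linear_recurrence _ (recurrenceInvariant_mem _ ?_ ?_ ?_ ?_ ?_ ?_) ?_ ?_ ?_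
    (eq_recurrenceInvariant_mul_sub_sub hrec hne)
  all_goals exact Algebra.subset_adjoin (by simp)
end

section
/- Define F₁(x₁,x₂,x₃) = ((x₂ + x₃² + x₂² x₃)/x₁, x₂, x₃), F₂(x₁,x₂,x₃) = (x₁, (x₁ + x₃)/x₂, x₃), F₃(x₁,x₂,x₃) = (x₁, x₂, (x₂ + x₁² + x₂² x₁)/x₃). Then any finite composition F_{i₁} ∘ F_{i₂} ∘ ⋯ ∘ F_{i_m} maps (x₁,x₂,x₃) to a triple (G₁,G₂,G₃) of Laurent polynomials in x₁, x₂, x₃ with integer coefficients. -/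
/-!
The quantity `K = ((x₁ + x₃)² + x₂ (1 + x₁x₂ + x₂x₃)) / (x₁x₂x₃)` is invariant under all three
maps and is a Laurent polynomial in the initial variables. Rewriting the exchange relations with
`K` makes them division-free: `F₁` replaces `x₁` by `K x₂x₃ - x₁ - 2x₃ - x₂²`, and `F₃` is `F₁`
with `x₁, x₃` swapped. For `F₂`, one keeps track of a Laurent polynomial `t` with
`x₁ + x₃ = x₂ t`; then `F₂` replaces `x₂` by `t`, and `t` itself is updated polynomially by
each map.
-/

open MvPolynomial

structure LaurentTriple {F S : Type*} [Field F] [SetLike S F] (A : S) (K a b c : F) : Prop where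
  fst_mem : a ∈ A
  snd_mem : b ∈ A
  thd_mem : c ∈ A
  invariant_mem : K ∈ A
  exists_add_eq_mul : ∃ t ∈ A, a + c = b * t
  invariant : K * (a * b * c) = (a + c) ^ 2 + b * (1 + a * b + b * c)

namespace LaurentTriple

variable {F S : Type*} [Field F] [SetLike S F] {A : S} {K a b c : F}

theorem symm (h : LaurentTriple A K a b c) : LaurentTriple A K c b a where
  fst_mem := h.thd_mem
  snd_mem := h.snd_mem
  thd_mem := h.fst_mem
  invariant_mem := h.invariant_mem
  exists_add_eq_mul := by
    obtain ⟨t, ht, hadd⟩ := h.exists_add_eq_mul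
    exact ⟨t, ht, by rw [add_comm, hadd]⟩
  invariant := by linear_combination h.invariant

theorem exchange_fst_eq (ha : a ≠ 0) (h : LaurentTriple A K a b c) :
    (b + c ^ 2 + b ^ 2 * c) / a = K * b * c - a - 2 * c - b ^ 2 := by
  field_simp
  linear_combination -h.invariant

theorem exchange_snd (h : LaurentTriple A K a b c) :
    LaurentTriple A K a ((a + c) / b) c := by
  rcases eq_or_ne b 0 with rfl | hb
  · simpa using h
  obtain ⟨t, ht, hadd⟩ := h.exists_add_eq_mul
  have hdiv : (a + c) / b = t := by rw [hadd, mul_div_cancel_left₀ t hb]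
  rw [hdiv]
  refine ⟨h.fst_mem, ht, h.thd_mem, h.invariant_mem, ⟨b, h.snd_mem, by rw [hadd, mul_comm]⟩, ?_⟩
  apply mul_left_cancel₀ (pow_ne_zero 2 hb)
  linear_combination (a + c) * h.invariant +
    ((a * b + b * c) * t + (b + a ^ 2 + 2 * a * c + c ^ 2 - K * a * b * c)) * hadd

variable [SubringClass S F]

theorem of_ne_zero (ha : a ≠ 0) (hb : b ≠ 0) (hc : c ≠ 0) (ha_mem : a ∈ A) (hb_mem : b ∈ A)
    (hc_mem : c ∈ A) (ha_inv : a⁻¹ ∈ A) (hb_inv : b⁻¹ ∈ A) (hc_inv : c⁻¹ ∈ A) :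
    LaurentTriple A (((a + c) ^ 2 + b * (1 + a * b + b * c)) * (a⁻¹ * b⁻¹ * c⁻¹)) a b c where
  fst_mem := ha_mem
  snd_mem := hb_mem
  thd_mem := hc_mem
  invariant_mem := by
    have hnum : (a + c) ^ 2 + b * (1 + a * b + b * c) ∈ A :=
      add_mem (pow_mem (add_mem ha_mem hc_mem) 2)
        (mul_mem hb_mem
          (add_mem (add_mem (one_mem A) (mul_mem ha_mem hb_mem)) (mul_mem hb_mem hc_mem)))
    exact mul_mem hnum (mul_mem (mul_mem ha_inv hb_inv) hc_inv)
  exists_add_eq_mul := ⟨(a + c) * b⁻¹, mul_mem (add_mem ha_mem hc_mem) hb_inv, by field_simp⟩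
  invariant := by field_simp

theorem exchange_fst (h : LaurentTriple A K a b c) :
    LaurentTriple A K ((b + c ^ 2 + b ^ 2 * c) / a) b c := by
  rcases eq_or_ne a 0 with rfl | ha
  · simpa using h -- since `x / 0 = 0`, the map fixes the triple
  obtain ⟨t, ht, hadd⟩ := h.exists_add_eq_mul
  rw [h.exchange_fst_eq ha]
  refine ⟨?_, h.snd_mem, h.thd_mem, h.invariant_mem, ⟨K * c - t - b, ?_, ?_⟩, ?_⟩
  · exact sub_mem (sub_mem (sub_mem (mul_mem (mul_mem h.invariant_mem h.snd_mem) h.thd_mem)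
      h.fst_mem) (mul_mem (ofNat_mem A 2) h.thd_mem)) (pow_mem h.snd_mem 2)
  · exact sub_mem (sub_mem (mul_mem h.invariant_mem h.thd_mem) ht) h.snd_mem
  · linear_combination -hadd
  · linear_combination h.invariant

theorem exchange_thd (h : LaurentTriple A K a b c) :
    LaurentTriple A K a b ((b + a ^ 2 + b ^ 2 * a) / c) :=
  h.symm.exchange_fst.symm

end LaurentTriple

/-- The Laurent phenomenon for compositions of the three birational maps
F₁ : x₁ ↦ (x₂ + x₃² + x₂²x₃)/x₁,  F₂ : x₂ ↦ (x₁ + x₃)/x₂,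
F₃ : x₃ ↦ (x₂ + x₁² + x₂²x₁)/x₃. -/
theorem rank3_trinomial_laurent
    (F : Type*) [Field F] [Algebra (MvPolynomial (Fin 3) ℤ) F]
    [IsFractionRing (MvPolynomial (Fin 3) ℤ) F]
    (x : Fin 3 → F) (hx : ∀ i, x i = algebraMap (MvPolynomial (Fin 3) ℤ) F (X i))
    (step : Fin 3 → (F × F × F) → (F × F × F))
    (hstep1 : ∀ v : F × F × F,
      step 0 v = ((v.2.1 + v.2.2 ^ 2 + v.2.1 ^ 2 * v.2.2) / v.1, v.2.1, v.2.2))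
    (hstep2 : ∀ v : F × F × F,
      step 1 v = (v.1, (v.1 + v.2.2) / v.2.1, v.2.2))
    (hstep3 : ∀ v : F × F × F,
      step 2 v = (v.1, v.2.1, (v.2.1 + v.1 ^ 2 + v.2.1 ^ 2 * v.1) / v.2.2)) :
    ∀ l : List (Fin 3),
      (l.foldr step (x 0, x 1, x 2)).1 ∈ Algebra.adjoin ℤ
        (Set.range x ∪ Set.range (fun i => (x i)⁻¹)) ∧
      (l.foldr step (x 0, x 1, x 2)).2.1 ∈ Algebra.adjoin ℤ
        (Set.range x ∪ Set.range (fun i => (x i)⁻¹)) ∧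
      (l.foldr step (x 0, x 1, x 2)).2.2 ∈ Algebra.adjoin ℤ
        (Set.range x ∪ Set.range (fun i => (x i)⁻¹)) := by
  set A := Algebra.adjoin ℤ (Set.range x ∪ Set.range (fun i => (x i)⁻¹))
  have hmem i : x i ∈ A := Algebra.subset_adjoin (Or.inl ⟨i, rfl⟩)
  have hinv_mem i : (x i)⁻¹ ∈ A := Algebra.subset_adjoin (Or.inr ⟨i, rfl⟩)
  have hne i : x i ≠ 0 := by
    rw [hx i, map_ne_zero_iff _ (IsFractionRing.injective _ F)]
    exact X_ne_zero i
  obtain ⟨K, hinit⟩ : ∃ K, LaurentTriple A K (x 0) (x 1) (x 2) :=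
    ⟨_, .of_ne_zero (hne 0) (hne 1) (hne 2) (hmem 0) (hmem 1) (hmem 2)
      (hinv_mem 0) (hinv_mem 1) (hinv_mem 2)⟩
  suffices H : ∀ l : List (Fin 3), LaurentTriple A K (l.foldr step (x 0, x 1, x 2)).1
      (l.foldr step (x 0, x 1, x 2)).2.1 (l.foldr step (x 0, x 1, x 2)).2.2 from
    fun l => ⟨(H l).fst_mem, (H l).snd_mem, (H l).thd_mem⟩
  intro l
  induction l with
  | nil => exact hinit
  | cons i l ih =>
    rw [List.foldr_cons]
    match i with
    | 0 => rw [hstep1]; exact ih.exchange_fst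
    | 1 => rw [hstep2]; exact ih.exchange_snd
    | 2 => rw [hstep3]; exact ih.exchange_thd
end
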